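/- arXiv:math/0610353 — 7 statements merged into one kernel-verified Lean document; each statement's English description precedes it below -/
import Mathlib

section
/- Let L ⊆ ℤⁿ be a sublattice and I_L = ⟨∂^{u₊} − ∂^{u₋} : u ∈ L⟩ the lattice ideal in ℂ[∂₁,…,∂ₙ]. If L is saturated in ℤⁿ (i.e., L = (ℚL) ∩ ℤⁿ), then I_L is a prime ideal. -/
/-!
`I_L` is the kernel of the ring map `k[x₁,…,xₙ] → k[ℤⁿ ⧸ L]` sending `x^a` to the class of `a`:
the kernel of any map of monoid algebras induced by a monoid hom `f` is spanned by the binomials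
`x^a - x^b` with `f a = f b`, and a binomial with `a - b = u` is a monomial multiple of
`x^{u₊} - x^{u₋}`. Saturation makes the finitely generated group `ℤⁿ ⧸ L` torsion-free, hence
it embeds in some `ℤʳ` and has unique sums, so its group algebra over a domain is a domain.
-/

open MvPolynomial

namespace AddMonoidAlgebra

variable {R M G : Type*} [Ring R] [AddMonoid M] [AddMonoid G]

theorem ker_mapDomainRingHom (f : M →+ G) :
    RingHom.ker (mapDomainRingHom R f) =
      Ideal.span {p | ∃ a b, f a = f b ∧ p = single a 1 - single b 1} := by
  set I := Ideal.span {p : R[M] | ∃ a b, f a = f b ∧ p = single a 1 - single b 1}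
  refine le_antisymm (fun p hp => ?_) ?_
  · -- `invFun f ∘ f` moves each exponent within its fibre, so it changes `q` only modulo `I`.
    have hsection (q : R[M]) : q - mapDomain (Function.invFun f) (mapDomain f q) ∈ I := by
      induction q using induction_linear with
      | zero => simp
      | add p q hp hq =>
        simpa only [mapDomain_add, add_sub_add_comm] using I.add_mem hp hq
      | single a r =>
        have hfa : f a = f (Function.invFun f (f a)) := (Function.invFun_eq ⟨a, rfl⟩).symm
        have hsingle (m : M) : single m r = single 0 r * single m 1 := by
          rw [single_mul_single, zero_add, mul_one]
        rw [mapDomain_single, mapDomain_single, hsingle a, hsingle (Function.invFun f (f a)),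
          ← mul_sub]
        exact I.mul_mem_left _ (Ideal.subset_span ⟨a, _, hfa, rfl⟩)
    rw [RingHom.mem_ker, mapDomainRingHom_apply] at hp
    simpa [hp] using hsection p
  · rw [Ideal.span_le]
    rintro _ ⟨a, b, hab, rfl⟩
    rw [SetLike.mem_coe, RingHom.mem_ker, map_sub]
    simp [hab]

end AddMonoidAlgebra

theorem Submodule.isAddTorsionFree_quotient {M : Type*} [AddCommGroup M] (L : Submodule ℤ M)
    (hsat : ∀ k : ℤ, k ≠ 0 → ∀ v : M, k • v ∈ L → v ∈ L) : IsAddTorsionFree (M ⧸ L) where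
  nsmul_right_injective k hk := by
    rintro ⟨x⟩ ⟨y⟩ hxy
    simp only [Submodule.Quotient.quot_mk_eq_mk, ← Submodule.Quotient.mk_smul,
      Submodule.Quotient.eq, ← smul_sub] at hxy ⊢
    exact hsat k (by exact_mod_cast hk) _ (by simpa [natCast_zsmul] using hxy)

variable {σ : Type*}

theorem MvPolynomial.prod_X_pow_eq_monomial_equivFunOnFinite {R : Type*} [CommSemiring R]
    [Fintype σ] (e : σ → ℕ) :
    ∏ i, (X i : MvPolynomial σ R) ^ e i = monomial (Finsupp.equivFunOnFinite.symm e) 1 := by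
  rw [monomial_eq, C_1, one_mul, Finsupp.prod_fintype _ _ (fun _ => pow_zero _)]
  rfl

noncomputable def latticeClass (L : Submodule ℤ (σ → ℤ)) : (σ →₀ ℕ) →+ (σ → ℤ) ⧸ L :=
  L.mkQ.toAddMonoidHom.comp (((Nat.castAddMonoidHom ℤ).compLeft σ).comp Finsupp.coeFnAddHom)

theorem latticeClass_eq_iff {L : Submodule ℤ (σ → ℤ)} {a b : σ →₀ ℕ} :
    latticeClass L a = latticeClass L b ↔ (fun i => (a i : ℤ) - b i) ∈ L := by
  simp only [latticeClass, AddMonoidHom.coe_comp, Function.comp_apply]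
  show Submodule.Quotient.mk _ = Submodule.Quotient.mk _ ↔ _
  rw [Submodule.Quotient.eq]
  rfl

section LatticeIdeal

variable (R : Type*) [CommRing R] [Fintype σ] (L : Submodule ℤ (σ → ℤ))

noncomputable def latticeIdeal : Ideal (MvPolynomial σ R) :=
  Ideal.span {p | ∃ u ∈ L, p = (∏ i, X i ^ (u i).toNat) - ∏ i, X i ^ (-(u i)).toNat}

theorem latticeIdeal_eq_ker :
    latticeIdeal R L = RingHom.ker (AddMonoidAlgebra.mapDomainRingHom R (latticeClass L)) := by
  rw [AddMonoidAlgebra.ker_mapDomainRingHom, latticeIdeal]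
  apply le_antisymm <;> rw [Ideal.span_le]
  · rintro _ ⟨u, hu, rfl⟩
    refine Ideal.subset_span ⟨Finsupp.equivFunOnFinite.symm fun i => (u i).toNat,
      Finsupp.equivFunOnFinite.symm fun i => (-u i).toNat, latticeClass_eq_iff.mpr ?_, ?_⟩
    · convert hu using 1
      ext i
      simp only [Finsupp.coe_equivFunOnFinite_symm]
      omega
    · simp only [prod_X_pow_eq_monomial_equivFunOnFinite, single_eq_monomial]
  · rintro _ ⟨a, b, hab, rfl⟩
    rw [latticeClass_eq_iff] at hab
    set u : σ → ℤ := fun i => (a i : ℤ) - b i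
    have hsplit : AddMonoidAlgebra.single a 1 - AddMonoidAlgebra.single b 1 =
        monomial (a ⊓ b) (1 : R) * ((∏ i, X i ^ (u i).toNat) - ∏ i, X i ^ (-(u i)).toNat) := by
      simp only [prod_X_pow_eq_monomial_equivFunOnFinite, mul_sub, monomial_mul, mul_one]
      congr 3 <;> ext i <;> simp [u] <;> omega
    rw [SetLike.mem_coe, hsplit]
    exact Ideal.mul_mem_left _ _ (Ideal.subset_span ⟨u, hab, rfl⟩)

end LatticeIdeal

theorem latticeIdeal_isPrime {R : Type*} [CommRing R] [IsDomain R] [Fintype σ]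
    {L : Submodule ℤ (σ → ℤ)} (hsat : ∀ k : ℤ, k ≠ 0 → ∀ v : σ → ℤ, k • v ∈ L → v ∈ L) :
    (latticeIdeal R L).IsPrime := by
  have := L.isAddTorsionFree_quotient hsat
  have : AddMonoid.FG ((σ → ℤ) ⧸ L) :=
    AddGroup.fg_iff_addMonoid_fg.mp (Module.Finite.iff_addGroup_fg.mp inferInstance)
  rw [latticeIdeal_eq_ker]
  exact RingHom.ker_isPrime _

/-- If `L ⊆ ℤⁿ` is a saturated sublattice, then the lattice ideal
`I_L = ⟨∂^{u₊} − ∂^{u₋} : u ∈ L⟩ ⊆ ℂ[∂₁,…,∂ₙ]` is prime. -/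
theorem lattice_ideal_of_saturated_is_prime
    (n : ℕ) (L : Submodule ℤ (Fin n → ℤ))
    (hsat : ∀ (k : ℤ), k ≠ 0 → ∀ v : Fin n → ℤ, k • v ∈ L → v ∈ L) :
    (Ideal.span {p : MvPolynomial (Fin n) ℂ | ∃ u ∈ L,
        p = (∏ i, X i ^ (u i).toNat) - ∏ i, X i ^ (-(u i)).toNat}).IsPrime :=
  latticeIdeal_isPrime hsat
end

section
/- Let M be a q×q mixed invertible integer matrix with q ≥ 1 and let Γ be the M-subgraph of ℕ^q containing a fixed point γ. Then the system of constant-coefficient binomial differential equations I(M) = ⟨∂^{w₊} − ∂^{w₋} : w a column of M⟩ has, among formal power series of the form G = Σ_{u∈Γ} λ_u x^u, a unique solution with λ_γ = 1, and in this solution every coefficient λ_u for u ∈ Γ is nonzero. -/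
/-!
Weighting a coefficient by the factorial, `d u = u! * c u`, turns the equation of a column `w`
at `u` into `d (u + w₊) = d (u + w₋)`. Every edge of the `M`-graph joins two points of this
form, so `d` is constant on the component `Γ`: a solution normalized by `c γ = 1` must be
`c u = γ! / u!` on `Γ`, and conversely this restriction of the exponential series to `Γ` is a
solution, because the two points of every equation lie both inside or both outside `Γ`.
-/

open Nat Relation

namespace BinomialSeries

variable {ι κ : Type*} (M : Matrix ι κ ℤ)

/-- The edge relation of the graph `Γ(M)`. -/
def ColAdj (u v : ι → ℕ) : Prop :=
  ∃ k, (∀ i, (v i : ℤ) = u i + M i k) ∨ (∀ i, (u i : ℤ) = v i + M i k)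

variable {M} in
lemma ColAdj.symm {u v : ι → ℕ} : ColAdj M u v → ColAdj M v u := by
  rintro ⟨k, h | h⟩
  exacts [⟨k, Or.inr h⟩, ⟨k, Or.inl h⟩]

lemma colAdj_add_toNat (m : ι → ℕ) (k : κ) :
    ColAdj M (fun i => m i + (-M i k).toNat) (fun i => m i + (M i k).toNat) :=
  ⟨k, Or.inl fun i => by push_cast; omega⟩

lemma exists_add_toNat_of_eq_add {u v : ι → ℕ} {w : ι → ℤ} (h : ∀ i, (v i : ℤ) = u i + w i) :
    ∃ m : ι → ℕ, u = (fun i => m i + (-w i).toNat) ∧ v = (fun i => m i + (w i).toNat) :=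
  ⟨fun i => min (u i) (v i), funext fun i => by have := h i; dsimp only; omega,
    funext fun i => by have := h i; dsimp only; omega⟩

lemma reflTransGen_add_toNat_iff (γ m : ι → ℕ) (k : κ) :
    ReflTransGen (ColAdj M) γ (fun i => m i + (M i k).toNat) ↔
      ReflTransGen (ColAdj M) γ (fun i => m i + (-M i k).toNat) :=
  ⟨fun h => h.tail (colAdj_add_toNat M m k).symm,
    fun h => h.tail (colAdj_add_toNat M m k)⟩

variable [Fintype ι] {K : Type*} [Field K]

def multiFactorial (u : ι → ℕ) : ℕ := ∏ i, (u i)!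

open scoped Classical in
/-- The exponential series `∑ γ! / u! x^u` restricted to the component of `γ`. -/
noncomputable def componentSolution (γ : ι → ℕ) (u : ι → ℕ) : K :=
  if ReflTransGen (ColAdj M) γ u then multiFactorial γ / multiFactorial u else 0

lemma componentSolution_of_reflTransGen {γ u : ι → ℕ} (hu : ReflTransGen (ColAdj M) γ u) :
    componentSolution M γ u = (multiFactorial γ / multiFactorial u : K) := if_pos hu

lemma componentSolution_of_not_reflTransGen {γ u : ι → ℕ} (hu : ¬ReflTransGen (ColAdj M) γ u) :
    componentSolution M γ u = (0 : K) := if_neg hu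

variable [CharZero K]

lemma multiFactorial_ne_zero (u : ι → ℕ) : (multiFactorial u : K) ≠ 0 :=
  Nat.cast_ne_zero.mpr (Finset.prod_ne_zero_iff.mpr fun i _ => (factorial_pos (u i)).ne')

lemma cast_prod_factorial_div (u p : ι → ℕ) :
    (∏ i, (((u i + p i)! / (u i)! : ℕ) : K)) =
      (multiFactorial (fun i => u i + p i) : K) / multiFactorial u := by
  simp only [multiFactorial, Nat.cast_prod, ← Finset.prod_div_distrib]
  refine Finset.prod_congr rfl fun i _ => ?_
  rw [Nat.cast_div (factorial_dvd_factorial (Nat.le_add_right _ _))]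
  exact_mod_cast (factorial_pos (u i)).ne'

/-- The equation of `∂^p - ∂^m` at the monomial `x^u`, in terms of factorial-weighted
coefficients. -/
lemma prod_factorial_div_mul_eq_iff (c : (ι → ℕ) → K) (u p m : ι → ℕ) :
    (∏ i, (((u i + p i)! / (u i)! : ℕ) : K)) * c (fun i => u i + p i) =
        (∏ i, (((u i + m i)! / (u i)! : ℕ) : K)) * c (fun i => u i + m i) ↔
      multiFactorial (fun i => u i + p i) * c (fun i => u i + p i) =
        multiFactorial (fun i => u i + m i) * c (fun i => u i + m i) := by
  simp only [cast_prod_factorial_div, div_mul_eq_mul_div]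
  exact div_left_inj' (multiFactorial_ne_zero u)

/-- The coefficient equations of `(∂^{w₊} - ∂^{w₋}) G = 0` for every column `w` of `M`,
where `G = ∑ c u x^u`. -/
def IsBinomialSolution (c : (ι → ℕ) → K) : Prop :=
  ∀ (k : κ) (u : ι → ℕ),
    (∏ i, (((u i + (M i k).toNat)! / (u i)! : ℕ) : K)) * c (fun i => u i + (M i k).toNat) =
      (∏ i, (((u i + (-M i k).toNat)! / (u i)! : ℕ) : K)) * c (fun i => u i + (-M i k).toNat)

variable {M}

lemma IsBinomialSolution.multiFactorial_mul_eq_of_colAdj {c : (ι → ℕ) → K}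
    (hc : IsBinomialSolution M c) {u v : ι → ℕ} (huv : ColAdj M u v) :
    multiFactorial u * c u = multiFactorial v * c v := by
  obtain ⟨k, h | h⟩ := huv
  · obtain ⟨m, rfl, rfl⟩ := exists_add_toNat_of_eq_add h
    exact ((prod_factorial_div_mul_eq_iff c m _ _).mp (hc k m)).symm
  · obtain ⟨m, rfl, rfl⟩ := exists_add_toNat_of_eq_add h
    exact (prod_factorial_div_mul_eq_iff c m _ _).mp (hc k m)

lemma IsBinomialSolution.eq_factorial_div {c : (ι → ℕ) → K} (hc : IsBinomialSolution M c)
    {γ u : ι → ℕ} (hγ : c γ = 1) (hu : ReflTransGen (ColAdj M) γ u) :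
    c u = multiFactorial γ / multiFactorial u := by
  have hconst : multiFactorial γ * c γ = multiFactorial u * c u := by
    induction hu with
    | refl => rfl
    | tail _ hvw ih => exact ih.trans (hc.multiFactorial_mul_eq_of_colAdj hvw)
  rw [hγ, mul_one] at hconst
  rw [hconst, mul_div_cancel_left₀ _ (multiFactorial_ne_zero u)]

variable (M)

lemma componentSolution_self (γ : ι → ℕ) : componentSolution M γ γ = (1 : K) := by
  rw [componentSolution_of_reflTransGen M ReflTransGen.refl, div_self (multiFactorial_ne_zero γ)]

lemma isBinomialSolution_componentSolution (γ : ι → ℕ) :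
    IsBinomialSolution M (componentSolution M γ : (ι → ℕ) → K) := by
  intro k u
  rw [prod_factorial_div_mul_eq_iff]
  by_cases hu : ReflTransGen (ColAdj M) γ (fun i => u i + (-M i k).toNat)
  · rw [componentSolution_of_reflTransGen M hu,
      componentSolution_of_reflTransGen M ((reflTransGen_add_toNat_iff M γ u k).mpr hu),
      mul_div_cancel₀ _ (multiFactorial_ne_zero _), mul_div_cancel₀ _ (multiFactorial_ne_zero _)]
  · rw [componentSolution_of_not_reflTransGen M hu,
      componentSolution_of_not_reflTransGen M (mt (reflTransGen_add_toNat_iff M γ u k).mp hu),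
      mul_zero, mul_zero]

end BinomialSeries

open BinomialSeries in
theorem unique_series_solution_on_component_general
    (q : ℕ) (M : Matrix (Fin q) (Fin q) ℤ)
    (γ : Fin q → ℕ) :
    let pp : Fin q → Fin q → ℕ := fun k i => (M i k).toNat
    let mm : Fin q → Fin q → ℕ := fun k i => (-(M i k)).toNat
    let adj : (Fin q → ℕ) → (Fin q → ℕ) → Prop := fun u v =>
      ∃ k : Fin q, (∀ i, (v i : ℤ) = (u i : ℤ) + M i k) ∨
                   (∀ i, (u i : ℤ) = (v i : ℤ) + M i k)
    let Γ : Set (Fin q → ℕ) := {u | Relation.ReflTransGen adj γ u}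
    let IsSol : ((Fin q → ℕ) → ℂ) → Prop := fun c =>
      ∀ (k : Fin q) (u : Fin q → ℕ),
        (∏ i, (((u i + pp k i).factorial / (u i).factorial : ℕ) : ℂ)) *
            c (fun i => u i + pp k i)
          = (∏ i, (((u i + mm k i).factorial / (u i).factorial : ℕ) : ℂ)) *
            c (fun i => u i + mm k i)
    (∃! c : (Fin q → ℕ) → ℂ,
        IsSol c ∧ (∀ u, u ∉ Γ → c u = 0) ∧ c γ = 1) ∧
    (∀ c : (Fin q → ℕ) → ℂ,
        IsSol c → (∀ u, u ∉ Γ → c u = 0) → c γ = 1 → ∀ u ∈ Γ, c u ≠ 0) := by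
  intro pp mm adj Γ IsSol
  have hsolution : IsSol (componentSolution M γ) := isBinomialSolution_componentSolution M γ
  have hsupport : ∀ u, u ∉ Γ → componentSolution M γ u = (0 : ℂ) :=
    fun u hu => componentSolution_of_not_reflTransGen M hu
  refine ⟨⟨componentSolution M γ, ⟨hsolution, hsupport, componentSolution_self M γ⟩, ?_⟩, ?_⟩
  · rintro c ⟨hc, hcsupport, hcγ⟩
    funext u
    by_cases hu : u ∈ Γ
    · rw [IsBinomialSolution.eq_factorial_div hc hcγ hu, componentSolution_of_reflTransGen M hu]
    · rw [hcsupport u hu, hsupport u hu]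
  · intro c hc _ hcγ u hu
    rw [IsBinomialSolution.eq_factorial_div hc hcγ hu]
    exact div_ne_zero (multiFactorial_ne_zero γ) (multiFactorial_ne_zero u)

/-- For a `q×q` mixed invertible integer matrix `M` and the
`M`-subgraph `Γ` of `ℕ^q` containing `γ`, the binomial system
`I(M) = ⟨∂^{w₊} − ∂^{w₋} : w column of M⟩` has a unique formal power series
solution supported on `Γ` with coefficient `1` at `x^γ`, and all the
coefficients of this solution on `Γ` are nonzero.  (A series `Σ c_u x^u` is a
solution iff for every column `w` and every `u`,
`((u+w₊)!/u!) c_{u+w₊} = ((u+w₋)!/u!) c_{u+w₋}`.) -/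
theorem unique_series_solution_on_component
    (q : ℕ) (hq : 1 ≤ q) (M : Matrix (Fin q) (Fin q) ℤ)
    (hdet : M.det ≠ 0)
    (hmix : ∀ k, (∃ i, 0 < M i k) ∧ (∃ i, M i k < 0))
    (γ : Fin q → ℕ) :
    let pp : Fin q → Fin q → ℕ := fun k i => (M i k).toNat
    let mm : Fin q → Fin q → ℕ := fun k i => (-(M i k)).toNat
    let adj : (Fin q → ℕ) → (Fin q → ℕ) → Prop := fun u v =>
      ∃ k : Fin q, (∀ i, (v i : ℤ) = (u i : ℤ) + M i k) ∨
                   (∀ i, (u i : ℤ) = (v i : ℤ) + M i k)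
    let Γ : Set (Fin q → ℕ) := {u | Relation.ReflTransGen adj γ u}
    let IsSol : ((Fin q → ℕ) → ℂ) → Prop := fun c =>
      ∀ (k : Fin q) (u : Fin q → ℕ),
        (∏ i, (((u i + pp k i).factorial / (u i).factorial : ℕ) : ℂ)) *
            c (fun i => u i + pp k i)
          = (∏ i, (((u i + mm k i).factorial / (u i).factorial : ℕ) : ℂ)) *
            c (fun i => u i + mm k i)
    (∃! c : (Fin q → ℕ) → ℂ,
        IsSol c ∧ (∀ u, u ∉ Γ → c u = 0) ∧ c γ = 1) ∧
    (∀ c : (Fin q → ℕ) → ℂ,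
        IsSol c → (∀ u, u ∉ Γ → c u = 0) → c γ = 1 → ∀ u ∈ Γ, c u ≠ 0) :=
  unique_series_solution_on_component_general q M γ
end

section
/- Let M be a q×q mixed invertible integer matrix. The set of formal power series solutions G_γ (one for each M-subgraph of ℕ^q, supported exactly on that subgraph) forms a basis of the space of formal power series solutions of the binomial system I(M); in particular, a formal power series solution of I(M) is determined by its coefficients on one chosen representative point of each M-subgraph. -/
/-!
Writing `W u = ∏ i, (u i)!`, the coefficient of `x^u` in `(∂^{w₊} - ∂^{w₋}) F` is
`(ν_{u+w₊} W(u+w₊) - ν_{u+w₋} W(u+w₋)) / W u`. So `F = Σ ν_u x^u` solves `I(M)` exactly when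
`u ↦ ν_u W u` is constant along the edges of `Γ(M)`, i.e. on each connected component, and
such a function is freely and uniquely prescribed by its values at one point per component.
-/

open Relation Nat

section InvariantExtension

variable {α β : Type*} {r : α → α → Prop} {R : Set α}

theorem Relation.ReflTransGen.eq_of_forall_eq {f : α → β} (hf : ∀ u v, r u v → f u = f v)
    {u v : α} (huv : ReflTransGen r u v) : f u = f v := by
  induction huv with
  | refl => rfl
  | tail _ hstep ih => exact ih.trans (hf _ _ hstep)

theorem Relation.existsUnique_invariant_extension [Std.Symm r]
    (hcover : ∀ u, ∃ x ∈ R, ReflTransGen r x u)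
    (hsep : ∀ x ∈ R, ∀ y ∈ R, ReflTransGen r x y → x = y) (g : α → β) :
    ∃! h : α → β, (∀ u v, r u v → h u = h v) ∧ ∀ x ∈ R, h x = g x := by
  choose rep hrepR hrep using hcover
  have rep_eq : ∀ u v, r u v → rep u = rep v := fun u v huv =>
    hsep _ (hrepR u) _ (hrepR v) (((hrep u).tail huv).trans (Std.Symm.symm _ _ (hrep v)))
  refine ⟨g ∘ rep, ⟨fun u v huv => congrArg g (rep_eq u v huv), fun x hx => ?_⟩, ?_⟩
  · exact congrArg g (hsep _ (hrepR x) _ hx (hrep x))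
  · rintro h ⟨hinv, hR⟩
    funext u
    rw [← (hrep u).eq_of_forall_eq hinv, hR _ (hrepR u)]
    rfl

theorem Relation.existsUnique_weighted_invariant_extension {K : Type*} [GroupWithZero K]
    [Std.Symm r] (hcover : ∀ u, ∃ x ∈ R, ReflTransGen r x u)
    (hsep : ∀ x ∈ R, ∀ y ∈ R, ReflTransGen r x y → x = y)
    {W : α → K} (hW : ∀ u, W u ≠ 0) (g : α → K) :
    ∃! c : α → K, (∀ u v, r u v → c u * W u = c v * W v) ∧ ∀ x ∈ R, c x = g x := by
  obtain ⟨h, ⟨hinv, hR⟩, huniq⟩ :=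
    existsUnique_invariant_extension hcover hsep fun u => g u * W u
  refine ⟨fun u => h u / W u, ⟨fun u v huv => ?_, fun x hx => ?_⟩, fun c ⟨hc, hcR⟩ => ?_⟩
  · simpa only [div_mul_cancel₀ _ (hW _)] using hinv u v huv
  · simp only [hR x hx, mul_div_cancel_right₀ _ (hW x)]
  · have hcW : (fun u => c u * W u) = h :=
      huniq _ ⟨hc, fun x hx => congrArg (· * W x) (hcR x hx)⟩
    funext u
    rw [← hcW, mul_div_cancel_right₀ _ (hW u)]

end InvariantExtension

section FactorialWeight

variable {ι : Type*} [Fintype ι] {K : Type*} [Field K] [CharZero K]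

theorem prod_factorial_ne_zero (u : ι → ℕ) : (∏ i, ((u i)! : K)) ≠ 0 :=
  Finset.prod_ne_zero_iff.2 fun i _ => by exact_mod_cast factorial_ne_zero (u i)

theorem prod_cast_factorial_add_div (u t : ι → ℕ) :
    (∏ i, (((u i + t i)! / (u i)! : ℕ) : K)) =
      (∏ i, ((u i + t i)! : K)) / ∏ i, ((u i)! : K) := by
  rw [← Finset.prod_div_distrib]
  refine Finset.prod_congr rfl fun i _ => ?_
  rw [Nat.cast_div (factorial_dvd_factorial (Nat.le_add_right _ _))]
  exact_mod_cast factorial_ne_zero (u i)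

theorem prod_factorial_div_mul_eq_iff (c : (ι → ℕ) → K) (u s t : ι → ℕ) :
    (∏ i, (((u i + s i)! / (u i)! : ℕ) : K)) * c (fun i => u i + s i) =
        (∏ i, (((u i + t i)! / (u i)! : ℕ) : K)) * c (fun i => u i + t i) ↔
      c (fun i => u i + s i) * ∏ i, ((u i + s i)! : K) =
        c (fun i => u i + t i) * ∏ i, ((u i + t i)! : K) := by
  rw [prod_cast_factorial_add_div, prod_cast_factorial_add_div, div_mul_eq_mul_div,
    div_mul_eq_mul_div, div_left_inj' (prod_factorial_ne_zero u), mul_comm, mul_comm _ (c _)]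

end FactorialWeight

theorem exists_eq_add_toNat_iff {ι : Type*} (u v : ι → ℕ) (w : ι → ℤ) :
    (∀ i, (v i : ℤ) = u i + w i) ↔
      ∃ u₀ : ι → ℕ, u = (fun i => u₀ i + (-w i).toNat) ∧ v = fun i => u₀ i + (w i).toNat := by
  constructor
  · intro h
    refine ⟨fun i => u i - (-w i).toNat, funext fun i => ?_, funext fun i => ?_⟩ <;>
      have := h i <;> dsimp only <;> omega
  · rintro ⟨u₀, rfl, rfl⟩ i
    push_cast
    omega

theorem forall_prod_factorial_div_mul_eq_iff {ι κ : Type*} [Fintype ι] {K : Type*} [Field K]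
    [CharZero K] (M : Matrix ι κ ℤ) (c : (ι → ℕ) → K) :
    (∀ (k : κ) (u : ι → ℕ),
      (∏ i, (((u i + (M i k).toNat)! / (u i)! : ℕ) : K)) * c (fun i => u i + (M i k).toNat) =
        (∏ i, (((u i + (-M i k).toNat)! / (u i)! : ℕ) : K)) *
          c (fun i => u i + (-M i k).toNat)) ↔
      ∀ u v, (∃ k, (∀ i, (v i : ℤ) = u i + M i k) ∨ (∀ i, (u i : ℤ) = v i + M i k)) →
        c u * ∏ i, ((u i)! : K) = c v * ∏ i, ((v i)! : K) := by
  simp only [prod_factorial_div_mul_eq_iff]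
  constructor
  · rintro h u v ⟨k, huv | hvu⟩
    · obtain ⟨u₀, rfl, rfl⟩ := (exists_eq_add_toNat_iff u v _).1 huv
      exact (h k u₀).symm
    · obtain ⟨u₀, rfl, rfl⟩ := (exists_eq_add_toNat_iff v u _).1 hvu
      exact h k u₀
  · intro h k u₀
    exact (h _ _ ⟨k, Or.inl ((exists_eq_add_toNat_iff _ _ _).2 ⟨u₀, rfl, rfl⟩)⟩).symm

theorem series_solutions_determined_by_representatives_general
    (q : ℕ) (M : Matrix (Fin q) (Fin q) ℤ)
    (R : Set (Fin q → ℕ)) :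
    let pp : Fin q → Fin q → ℕ := fun k i => (M i k).toNat
    let mm : Fin q → Fin q → ℕ := fun k i => (-(M i k)).toNat
    let adj : (Fin q → ℕ) → (Fin q → ℕ) → Prop := fun u v =>
      ∃ k : Fin q, (∀ i, (v i : ℤ) = (u i : ℤ) + M i k) ∨
                   (∀ i, (u i : ℤ) = (v i : ℤ) + M i k)
    let IsSol : ((Fin q → ℕ) → ℂ) → Prop := fun c =>
      ∀ (k : Fin q) (u : Fin q → ℕ),
        (∏ i, (((u i + pp k i).factorial / (u i).factorial : ℕ) : ℂ)) *
            c (fun i => u i + pp k i)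
          = (∏ i, (((u i + mm k i).factorial / (u i).factorial : ℕ) : ℂ)) *
            c (fun i => u i + mm k i)
    (∀ u : Fin q → ℕ, ∃ r ∈ R, Relation.ReflTransGen adj r u) →
    (∀ r ∈ R, ∀ r' ∈ R, Relation.ReflTransGen adj r r' → r = r') →
    ∀ g : (Fin q → ℕ) → ℂ,
      ∃! c : (Fin q → ℕ) → ℂ, IsSol c ∧ ∀ r ∈ R, c r = g r := by
  intro pp mm adj IsSol hcover hsep g
  have : Std.Symm adj := ⟨fun _ _ ⟨k, h⟩ => ⟨k, h.symm⟩⟩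
  have isSol_iff : ∀ c, IsSol c ↔
      ∀ u v, adj u v → c u * ∏ i, ((u i)! : ℂ) = c v * ∏ i, ((v i)! : ℂ) :=
    forall_prod_factorial_div_mul_eq_iff M
  simp only [isSol_iff]
  exact existsUnique_weighted_invariant_extension hcover hsep prod_factorial_ne_zero g

/-- For a `q×q` mixed invertible integer matrix `M`, the
solutions `G_γ` (one per `M`-subgraph) form a basis of the formal power
series solution space of `I(M)`: given a set `R` of representatives, one per
`M`-subgraph of `ℕ^q`, every assignment of values on `R` extends to a unique
formal power series solution of `I(M)`; in particular a solution is determined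
by its coefficients at the representatives. -/
theorem series_solutions_determined_by_representatives
    (q : ℕ) (hq : 1 ≤ q) (M : Matrix (Fin q) (Fin q) ℤ)
    (hdet : M.det ≠ 0)
    (hmix : ∀ k, (∃ i, 0 < M i k) ∧ (∃ i, M i k < 0))
    (R : Set (Fin q → ℕ)) :
    let pp : Fin q → Fin q → ℕ := fun k i => (M i k).toNat
    let mm : Fin q → Fin q → ℕ := fun k i => (-(M i k)).toNat
    let adj : (Fin q → ℕ) → (Fin q → ℕ) → Prop := fun u v =>
      ∃ k : Fin q, (∀ i, (v i : ℤ) = (u i : ℤ) + M i k) ∨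
                   (∀ i, (u i : ℤ) = (v i : ℤ) + M i k)
    let IsSol : ((Fin q → ℕ) → ℂ) → Prop := fun c =>
      ∀ (k : Fin q) (u : Fin q → ℕ),
        (∏ i, (((u i + pp k i).factorial / (u i).factorial : ℕ) : ℂ)) *
            c (fun i => u i + pp k i)
          = (∏ i, (((u i + mm k i).factorial / (u i).factorial : ℕ) : ℂ)) *
            c (fun i => u i + mm k i)
    (∀ u : Fin q → ℕ, ∃ r ∈ R, Relation.ReflTransGen adj r u) →
    (∀ r ∈ R, ∀ r' ∈ R, Relation.ReflTransGen adj r r' → r = r') →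
    ∀ g : (Fin q → ℕ) → ℂ,
      ∃! c : (Fin q → ℕ) → ℂ, IsSol c ∧ ∀ r ∈ R, c r = g r :=
  series_solutions_determined_by_representatives_general q M R
end

section
/- Let M be a q×q mixed invertible integer matrix. A formal power series solution of I(M) supported on finitely many monomials (i.e., a polynomial solution) has support contained in a union of bounded M-subgraphs, and the polynomial solutions G_γ for γ ranging over representatives of the bounded M-subgraphs form a basis of the space of polynomial solutions of I(M). In particular, the dimension of the space of polynomial solutions of I(M) equals the number of bounded M-subgraphs of ℕ^q. -/
/-! Multiplying the recurrence of the column `k` at the monomial `u` by `u!` shows that a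
solution `c` of `I(M)` is exactly a function for which `c u · u!` is constant along the edges of
`Γ(M)`, hence on each `M`-subgraph. A solution is therefore determined by its values on a set of
representatives of the subgraphs, any such values can be prescribed, and the solution vanishes
nowhere on the subgraph of a representative with nonzero value; so it is a polynomial exactly
when it is nonzero only on finitely many, bounded, subgraphs. -/

open Nat Relation

section Representatives

variable {α K : Type*} [Field K] {r : α → α → Prop} {w c : α → K}

theorem mul_eq_of_reflTransGen (hc : ∀ u v, r u v → c u * w u = c v * w v) {u v : α}
    (h : ReflTransGen r u v) : c u * w u = c v * w v := by
  induction h with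
  | refl => rfl
  | tail _ hstep ih => exact ih.trans (hc _ _ hstep)

theorem setOf_reflTransGen_subset_support (hw : ∀ u, w u ≠ 0)
    (hc : ∀ u v, r u v → c u * w u = c v * w v) {u : α} (hu : c u ≠ 0) :
    {v | ReflTransGen r u v} ⊆ Function.support c := by
  intro v huv hv
  have := mul_eq_of_reflTransGen hc huv
  rw [hv, zero_mul] at this
  exact mul_ne_zero hu (hw u) this

theorem existsUnique_of_representatives [Std.Symm r] (hw : ∀ u, w u ≠ 0) {R : Set α}
    (hcover : ∀ u, ∃ ρ ∈ R, ReflTransGen r ρ u)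
    (huniq : ∀ ρ ∈ R, ∀ ρ' ∈ R, ReflTransGen r ρ ρ' → ρ = ρ') {g : α → K}
    (hg : (Function.support g).Finite)
    (hgR : ∀ ρ, g ρ ≠ 0 → {v | ReflTransGen r ρ v}.Finite) :
    ∃! c : α → K, (∀ u v, r u v → c u * w u = c v * w v) ∧
      (Function.support c).Finite ∧ ∀ ρ ∈ R, c ρ = g ρ := by
  choose rep hrepR hrep using hcover
  have rep_eq : ∀ u v, ReflTransGen r u v → rep u = rep v := fun u v huv =>
    huniq _ (hrepR u) _ (hrepR v) (((hrep u).trans huv).trans (symm (hrep v)))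
  refine ⟨fun u => g (rep u) * w (rep u) / w u, ⟨?_, ?_, ?_⟩, ?_⟩
  · intro u v huv
    simp only [div_mul_cancel₀ _ (hw _), rep_eq u v (.single huv)]
  · refine (hg.biUnion fun ρ hρ => hgR ρ hρ).subset fun u hu => ?_
    have hgu : g (rep u) ≠ 0 := fun h0 => hu (by simp [h0])
    exact Set.mem_biUnion hgu (hrep u)
  · intro ρ hρ
    simp only [huniq _ (hrepR ρ) ρ hρ (hrep ρ), mul_div_cancel_right₀ _ (hw ρ)]
  · rintro c ⟨hc, -, hcR⟩
    funext u
    rw [eq_div_iff (hw u), ← hcR _ (hrepR u)]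
    exact (mul_eq_of_reflTransGen hc (hrep u)).symm

end Representatives

section BinomialSystem

variable {ι κ K : Type*} [Fintype ι] [Field K]

def multiFactorial (u : ι → ℕ) : K := ∏ i, ((u i)! : K)

theorem multiFactorial_ne_zero [CharZero K] (u : ι → ℕ) : (multiFactorial u : K) ≠ 0 :=
  Finset.prod_ne_zero_iff.mpr fun _ _ => Nat.cast_ne_zero.mpr (factorial_ne_zero _)

theorem prod_factorial_div_mul_multiFactorial (b p : ι → ℕ) :
    (∏ i, (((b i + p i)! / (b i)! : ℕ) : K)) * multiFactorial b =
      multiFactorial fun i => b i + p i := by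
  rw [multiFactorial, multiFactorial, ← Finset.prod_mul_distrib]
  refine Finset.prod_congr rfl fun i _ => ?_
  rw [← Nat.cast_mul, Nat.div_mul_cancel (factorial_dvd_factorial (le_add_right _ _))]

/-- The edge `u → v` of `Γ(M)` along the column `k`. -/
def ColumnStep (M : Matrix ι κ ℤ) (k : κ) (u v : ι → ℕ) : Prop :=
  ∀ i, (v i : ℤ) = u i + M i k

def ColumnAdj (M : Matrix ι κ ℤ) (u v : ι → ℕ) : Prop :=
  ∃ k, ColumnStep M k u v ∨ ColumnStep M k v u

instance (M : Matrix ι κ ℤ) : Std.Symm (ColumnAdj M) where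
  symm _ _ := fun ⟨k, h⟩ => ⟨k, h.symm⟩

/-- The recurrence imposed on the coefficients `c` of a series by `∂^{w₊} − ∂^{w₋}`, where `w` is
the column `k` of `M`, read off at the monomial `x^u`. -/
def SolvesColumn (M : Matrix ι κ ℤ) (c : (ι → ℕ) → K) (k : κ) : Prop :=
  ∀ u : ι → ℕ,
    (∏ i, (((u i + (M i k).toNat)! / (u i)! : ℕ) : K)) * c (fun i => u i + (M i k).toNat) =
      (∏ i, (((u i + (-M i k).toNat)! / (u i)! : ℕ) : K)) * c (fun i => u i + (-M i k).toNat)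

theorem solvesColumn_iff [CharZero K] {M : Matrix ι κ ℤ} {c : (ι → ℕ) → K} {k : κ} :
    SolvesColumn M c k ↔ ∀ u v, ColumnStep M k u v →
      c u * multiFactorial u = c v * multiFactorial v := by
  constructor
  · intro hc u v huv
    -- every edge `u → v` along `k` starts at `b + (-w)₊` and ends at `b + w₊`, where `b = min u v`
    have hv : (fun i => min (u i) (v i) + (M i k).toNat) = v := by
      funext i; have := huv i; omega
    have hu : (fun i => min (u i) (v i) + (-M i k).toNat) = u := by
      funext i; have := huv i; omega
    have hb := hc fun i => min (u i) (v i)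
    have hpv := prod_factorial_div_mul_multiFactorial (K := K) (fun i => min (u i) (v i))
      fun i => (M i k).toNat
    have hmu := prod_factorial_div_mul_multiFactorial (K := K) (fun i => min (u i) (v i))
      fun i => (-M i k).toNat
    rw [hv, hu] at *
    linear_combination (-multiFactorial fun i => min (u i) (v i)) * hb + c v * hpv - c u * hmu
  · intro hc u
    have hstep : ColumnStep M k (fun i => u i + (-M i k).toNat) (fun i => u i + (M i k).toNat) :=
      fun i => by push_cast; omega
    have h := hc _ _ hstep
    rw [← prod_factorial_div_mul_multiFactorial, ← prod_factorial_div_mul_multiFactorial] at h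
    exact mul_right_cancel₀ (multiFactorial_ne_zero u) (by linear_combination -h)

theorem forall_solvesColumn_iff [CharZero K] {M : Matrix ι κ ℤ} {c : (ι → ℕ) → K} :
    (∀ k, SolvesColumn M c k) ↔ ∀ u v, ColumnAdj M u v →
      c u * multiFactorial u = c v * multiFactorial v := by
  simp only [solvesColumn_iff, ColumnAdj]
  refine ⟨fun hc u v ⟨k, huv⟩ => huv.elim (hc k u v) fun hvu => (hc k v u hvu).symm,
    fun hc k u v huv => hc u v ⟨k, .inl huv⟩⟩

end BinomialSystem

theorem polynomial_solutions_basis_general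
    (q : ℕ) (M : Matrix (Fin q) (Fin q) ℤ)
    (R : Set (Fin q → ℕ)) :
    let pp : Fin q → Fin q → ℕ := fun k i => (M i k).toNat
    let mm : Fin q → Fin q → ℕ := fun k i => (-(M i k)).toNat
    let adj : (Fin q → ℕ) → (Fin q → ℕ) → Prop := fun u v =>
      ∃ k : Fin q, (∀ i, (v i : ℤ) = (u i : ℤ) + M i k) ∨
                   (∀ i, (u i : ℤ) = (v i : ℤ) + M i k)
    let IsSol : ((Fin q → ℕ) → ℂ) → Prop := fun c =>
      ∀ (k : Fin q) (u : Fin q → ℕ),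
        (∏ i, (((u i + pp k i).factorial / (u i).factorial : ℕ) : ℂ)) *
            c (fun i => u i + pp k i)
          = (∏ i, (((u i + mm k i).factorial / (u i).factorial : ℕ) : ℂ)) *
            c (fun i => u i + mm k i)
    (∀ u : Fin q → ℕ, ∃ r ∈ R, Relation.ReflTransGen adj r u) →
    (∀ r ∈ R, ∀ r' ∈ R, Relation.ReflTransGen adj r r' → r = r') →
    ((∀ c : (Fin q → ℕ) → ℂ, IsSol c → (Function.support c).Finite →
        ∀ u : Fin q → ℕ, c u ≠ 0 →
          {v : Fin q → ℕ | Relation.ReflTransGen adj u v}.Finite) ∧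
     (∀ g : (Fin q → ℕ) → ℂ, (Function.support g).Finite →
        (∀ r : Fin q → ℕ, g r ≠ 0 →
          r ∈ R ∧ {v : Fin q → ℕ | Relation.ReflTransGen adj r v}.Finite) →
        ∃! c : (Fin q → ℕ) → ℂ,
          IsSol c ∧ (Function.support c).Finite ∧ ∀ r ∈ R, c r = g r)) := by
  intro _ _ adj IsSol hcover huniq
  have hsol (c : (Fin q → ℕ) → ℂ) :
      IsSol c ↔ ∀ u v, adj u v → c u * multiFactorial u = c v * multiFactorial v :=
    forall_solvesColumn_iff
  refine ⟨fun c hc hfin u hu => hfin.subset ?_, fun g hg hgR => ?_⟩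
  · exact setOf_reflTransGen_subset_support multiFactorial_ne_zero ((hsol c).mp hc) hu
  · rw [existsUnique_congr fun c => and_congr_left' (hsol c)]
    exact existsUnique_of_representatives (r := ColumnAdj M) multiFactorial_ne_zero hcover huniq
      hg fun ρ hρ => (hgR ρ hρ).2

/-- For a `q×q` mixed invertible integer matrix `M`: any
polynomial (finitely supported) solution of `I(M)` is supported on bounded
`M`-subgraphs, and the polynomial solutions `G_γ`, for `γ` ranging over
representatives of bounded `M`-subgraphs, form a basis of the space of
polynomial solutions — i.e. every finitely supported assignment on bounded
representatives extends to a unique polynomial solution; so the dimension of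
the polynomial solution space equals the number of bounded `M`-subgraphs. -/
theorem polynomial_solutions_basis
    (q : ℕ) (hq : 1 ≤ q) (M : Matrix (Fin q) (Fin q) ℤ)
    (hdet : M.det ≠ 0)
    (hmix : ∀ k, (∃ i, 0 < M i k) ∧ (∃ i, M i k < 0))
    (R : Set (Fin q → ℕ)) :
    let pp : Fin q → Fin q → ℕ := fun k i => (M i k).toNat
    let mm : Fin q → Fin q → ℕ := fun k i => (-(M i k)).toNat
    let adj : (Fin q → ℕ) → (Fin q → ℕ) → Prop := fun u v =>
      ∃ k : Fin q, (∀ i, (v i : ℤ) = (u i : ℤ) + M i k) ∨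
                   (∀ i, (u i : ℤ) = (v i : ℤ) + M i k)
    let IsSol : ((Fin q → ℕ) → ℂ) → Prop := fun c =>
      ∀ (k : Fin q) (u : Fin q → ℕ),
        (∏ i, (((u i + pp k i).factorial / (u i).factorial : ℕ) : ℂ)) *
            c (fun i => u i + pp k i)
          = (∏ i, (((u i + mm k i).factorial / (u i).factorial : ℕ) : ℂ)) *
            c (fun i => u i + mm k i)
    (∀ u : Fin q → ℕ, ∃ r ∈ R, Relation.ReflTransGen adj r u) →
    (∀ r ∈ R, ∀ r' ∈ R, Relation.ReflTransGen adj r r' → r = r') →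
    ((∀ c : (Fin q → ℕ) → ℂ, IsSol c → (Function.support c).Finite →
        ∀ u : Fin q → ℕ, c u ≠ 0 →
          {v : Fin q → ℕ | Relation.ReflTransGen adj u v}.Finite) ∧
     (∀ g : (Fin q → ℕ) → ℂ, (Function.support g).Finite →
        (∀ r : Fin q → ℕ, g r ≠ 0 →
          r ∈ R ∧ {v : Fin q → ℕ | Relation.ReflTransGen adj r v}.Finite) →
        ∃! c : (Fin q → ℕ) → ℂ,
          IsSol c ∧ (Function.support c).Finite ∧ ∀ r ∈ R, c r = g r)) :=
  polynomial_solutions_basis_general q M R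
end

section
/- For the 3×3 matrix M with columns (1,−1,0), (−5,1,3), (0,−1,1), the bounded M-subgraphs of ℕ³ are exactly the four slices {(a,b,c) ∈ ℕ³ : a+b+c = n} for n = 0,1,2,3, and the set {(a,b,c) ∈ ℕ³ : a+b+c ≥ 4} is a single unbounded M-subgraph. Consequently the polynomials 1, x+y+z, (x+y+z)², (x+y+z)³ form a basis of the polynomial solutions of I(M). -/
/-!
The moves `±w₁` and `±w₃` preserve the coordinate sum and already connect every `u ∈ ℕ³` to
`(Σu, 0, 0)`; a `±w₂` move changes the sum by one but needs a coordinate `≥ 5`, or `≥ 1` and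
`≥ 3`, at one end, so it only joins points of sum `≥ 4`, and it does join `(n, 1, 3)` to
`(n + 5, 0, 0)`. Hence `min (Σu) 4` is a complete invariant of the components.

For a solution `p` we have `∂₁p = ∂₂p = ∂₃p`, so `∂₁ᵏ p` is again such a polynomial and
`∂₂∂₃³ − ∂₁⁵` becomes `∂₁⁴ − ∂₁⁵`. Since no nonzero polynomial is fixed by `∂₁`, `∂₁⁴ p = 0`, and
integrating one order at a time shows that `p` is a polynomial of degree `< 4` in `x + y + z`.
-/

open MvPolynomial

namespace MvPolynomial

variable {σ R : Type*}

section CommSemiring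

variable [CommSemiring R]

theorem pderiv_pderiv_comm (i j : σ) (p : MvPolynomial σ R) :
    pderiv i (pderiv j p) = pderiv j (pderiv i p) := by
  classical
  ext m
  rcases eq_or_ne i j with rfl | hij
  · rfl
  simp only [coeff_pderiv, Finsupp.add_apply, Finsupp.single_apply, if_neg hij,
    if_neg hij.symm, add_zero, add_right_comm m]
  ring

theorem pderiv_iterate_pderiv_of_forall_pderiv_eq {i₀ : σ} {p : MvPolynomial σ R}
    (hp : ∀ i, pderiv i p = pderiv i₀ p) (i : σ) (k : ℕ) :
    pderiv i ((pderiv i₀)^[k] p) = (pderiv i₀)^[k + 1] p := by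
  have hcomm : Function.Commute (pderiv i) (pderiv i₀ : MvPolynomial σ R → _) :=
    fun q => pderiv_pderiv_comm i i₀ q
  rw [(hcomm.iterate_right k).eq, hp, Function.iterate_succ_apply]

theorem iterate_pderiv_of_forall_pderiv_eq {i₀ : σ} {p : MvPolynomial σ R}
    (hp : ∀ i, pderiv i p = pderiv i₀ p) (i : σ) (k : ℕ) :
    (pderiv i)^[k] p = (pderiv i₀)^[k] p := by
  induction k with
  | zero => simp only [Function.iterate_zero_apply]
  | succ k ih =>
    rw [Function.iterate_succ_apply', ih, pderiv_iterate_pderiv_of_forall_pderiv_eq hp]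

theorem eq_zero_of_pderiv_eq_self {i : σ} {r : MvPolynomial σ R} (h : pderiv i r = r) :
    r = 0 := by
  classical
  -- `coeff m r = (m i + 1) * coeff (m + single i 1) r`, so vanishing descends from high degree
  have key : ∀ j m, r.totalDegree < m.degree + j → coeff m r = 0 := by
    intro j
    induction j with
    | zero => exact fun m hm => coeff_eq_zero_of_totalDegree_lt hm
    | succ j ih =>
      intro m hm
      have hdeg : (m + Finsupp.single i 1).degree = m.degree + 1 := by
        rw [map_add, Finsupp.degree_single]
      rw [← h, coeff_pderiv, ih _ (by omega), zero_mul]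
  ext m
  exact key (r.totalDegree + 1) m (by omega)

variable [Fintype σ]

theorem pderiv_sum_X (i : σ) : pderiv i (∑ j, X j : MvPolynomial σ R) = 1 := by
  classical
  simp [pderiv_X]

theorem iterate_pderiv_sum_X_pow (i : σ) (k n : ℕ) :
    (pderiv i)^[k] ((∑ j, X j : MvPolynomial σ R) ^ n)
      = n.descFactorial k • (∑ j, X j) ^ (n - k) := by
  induction k with
  | zero => simp
  | succ k ih =>
    rw [Function.iterate_succ_apply', ih, map_nsmul, pderiv_pow, pderiv_sum_X, mul_one,
      ← nsmul_eq_mul, smul_smul, Nat.descFactorial_succ, mul_comm, Nat.sub_sub]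

theorem sum_smul_sum_X_pow_injective (i₀ : σ) (k : ℕ) :
    Function.Injective fun a : Fin k → R => ∑ n, a n • (∑ j, X j : MvPolynomial σ R) ^ (n : ℕ) := by
  classical
  intro a b hab
  set φ := aeval (R := R) (σ := σ) (Pi.single i₀ (Polynomial.X : Polynomial R))
  have hcoeff (c : Fin k → R) (n : Fin k) :
      (φ (∑ n, c n • (∑ j, X j) ^ (n : ℕ))).coeff n = c n := by
    simp [φ, Polynomial.coeff_X_pow, Fin.val_eq_val]
  funext n
  simpa only [hcoeff] using congrArg (fun q => (φ q).coeff n) hab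

end CommSemiring

section Field

variable {K : Type*} [Field K] [CharZero K]

theorem eq_C_of_forall_pderiv_eq_zero {p : MvPolynomial σ K} (hp : ∀ i, pderiv i p = 0) :
    p = C (coeff 0 p) := by
  classical
  ext m
  rw [coeff_C]
  split_ifs with hm
  · rw [hm]
  obtain ⟨i, hi⟩ : ∃ i, m i ≠ 0 := by
    by_contra! h
    exact Ne.symm hm (Finsupp.ext h)
  have hle : Finsupp.single i 1 ≤ m := Finsupp.single_le_iff.mpr (Nat.one_le_iff_ne_zero.mpr hi)
  have := coeff_pderiv (i := i) p (m - Finsupp.single i 1)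
  rw [hp, coeff_zero, tsub_add_cancel_of_le hle] at this
  exact (mul_eq_zero.mp this.symm).resolve_right (Nat.cast_add_one_ne_zero _)

variable [Fintype σ]

theorem exists_eq_sum_smul_sum_X_pow {i₀ : σ} {p : MvPolynomial σ K}
    (hp : ∀ i, pderiv i p = pderiv i₀ p) {k : ℕ} (hk : (pderiv i₀)^[k] p = 0) :
    ∃ a : Fin k → K, p = ∑ n, a n • (∑ j, X j) ^ (n : ℕ) := by
  induction k generalizing p with
  | zero => exact ⟨Fin.elim0, by simpa using hk⟩
  | succ k ih =>
    obtain ⟨a, ha⟩ := ih (p := pderiv i₀ p)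
      (fun i => by rw [pderiv_pderiv_comm, hp]) (by rwa [← Function.iterate_succ_apply])
    -- integrate the expansion of `pderiv i₀ p` termwise; the remainder `q` is then constant
    set q := p - ∑ n : Fin k, (a n / ((n : K) + 1)) • (∑ j, X j) ^ ((n : ℕ) + 1)
    have hq : ∀ i, pderiv i q = 0 := by
      intro i
      have hantideriv (n : ℕ) (c : K) :
          pderiv i ((c / ((n : K) + 1)) • (∑ j, X j : MvPolynomial σ K) ^ (n + 1))
            = c • (∑ j, X j) ^ n := by
        rw [Derivation.map_smul, pderiv_pow, pderiv_sum_X, mul_one, Nat.add_sub_cancel,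
          ← nsmul_eq_mul, ← Nat.cast_smul_eq_nsmul K, smul_smul, Nat.cast_succ,
          div_mul_cancel₀ _ (Nat.cast_add_one_ne_zero n)]
      simp only [q, map_sub, map_sum, hantideriv, hp i, ha, sub_self]
    refine ⟨Fin.cons (coeff 0 q) fun n => a n / ((n : K) + 1), ?_⟩
    rw [Fin.sum_univ_succ]
    simp only [Fin.cons_zero, Fin.cons_succ, Fin.val_zero, pow_zero, Fin.val_succ]
    rw [← C_mul', mul_one, ← eq_C_of_forall_pderiv_eq_zero hq, sub_add_cancel]

theorem existsUnique_eq_sum_smul_sum_X_pow {i₀ : σ} {p : MvPolynomial σ K}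
    (hp : ∀ i, pderiv i p = pderiv i₀ p) {k : ℕ} (hk : (pderiv i₀)^[k] p = 0) :
    ∃! a : Fin k → K, p = ∑ n, a n • (∑ j, X j) ^ (n : ℕ) :=
  let ⟨a, ha⟩ := exists_eq_sum_smul_sum_X_pow hp hk
  ⟨a, ha, fun _ hb => sum_smul_sum_X_pow_injective i₀ k (hb.symm.trans ha)⟩

end Field

end MvPolynomial

def movesAdj {n : ℕ} (W : Set (Fin n → ℤ)) (u v : Fin n → ℕ) : Prop :=
  ∃ w ∈ W, (∀ i, (v i : ℤ) = u i + w i) ∨ (∀ i, (u i : ℤ) = v i + w i)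

instance {n : ℕ} (W : Set (Fin n → ℤ)) : Std.Symm (movesAdj W) where
  symm _ _ := fun ⟨w, hw, h⟩ => ⟨w, hw, h.symm⟩

theorem movesAdj_of_mem {n : ℕ} {W : Set (Fin n → ℤ)} {w : Fin n → ℤ} (hw : w ∈ W)
    {u v : Fin n → ℕ} (h : ∀ i, (v i : ℤ) = u i + w i) : movesAdj W u v :=
  ⟨w, hw, .inl h⟩

namespace MSubgraph

def M : Set (Fin 3 → ℤ) := {![1, -1, 0], ![-5, 1, 3], ![0, -1, 1]}

theorem min_sum_eq_of_movesAdj {u v : Fin 3 → ℕ} (h : movesAdj M u v) :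
    min (∑ i, u i) 4 = min (∑ i, v i) 4 := by
  obtain ⟨w, hw, h⟩ := h
  simp only [M, Set.mem_insert_iff, Set.mem_singleton_iff] at hw
  simp only [Fin.sum_univ_three]
  rcases hw with rfl | rfl | rfl <;> rcases h with h | h <;>
    · have h₀ := h 0; have h₁ := h 1; have h₂ := h 2
      simp only [Matrix.cons_val] at h₀ h₁ h₂
      omega

theorem min_sum_eq_of_reflTransGen {u v : Fin 3 → ℕ} (h : Relation.ReflTransGen (movesAdj M) u v) :
    min (∑ i, u i) 4 = min (∑ i, v i) 4 := by
  induction h with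
  | refl => rfl
  | tail _ hadj ih => exact ih.trans (min_sum_eq_of_movesAdj hadj)

theorem reflTransGen_shift_one (a b c k : ℕ) :
    Relation.ReflTransGen (movesAdj M) ![a, b + k, c] ![a + k, b, c] := by
  induction k generalizing a with
  | zero => rfl
  | succ k ih =>
    rw [← add_assoc, show a + (k + 1) = a + 1 + k by omega]
    refine .head (movesAdj_of_mem (w := ![1, -1, 0]) (by simp [M]) ?_) (ih (a + 1))
    intro i; fin_cases i <;> simp

theorem reflTransGen_shift_three (a b c k : ℕ) :
    Relation.ReflTransGen (movesAdj M) ![a, b, c + k] ![a, b + k, c] := by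
  induction k generalizing b with
  | zero => rfl
  | succ k ih =>
    rw [← add_assoc, show b + (k + 1) = b + 1 + k by omega]
    refine .head (symm (movesAdj_of_mem (w := ![0, -1, 1]) (by simp [M]) ?_)) (ih (b + 1))
    intro i; fin_cases i <;> simp

theorem reflTransGen_sum_zero_zero (u : Fin 3 → ℕ) :
    Relation.ReflTransGen (movesAdj M) u ![∑ i, u i, 0, 0] := by
  have hu : u = ![u 0, u 1, 0 + u 2] := by
    funext i; fin_cases i <;> simp
  have h₃ := reflTransGen_shift_three (u 0) (u 1) 0 (u 2)
  have h₁ := reflTransGen_shift_one (u 0) 0 0 (u 1 + u 2)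
  rw [zero_add] at h₁
  rw [Fin.sum_univ_three, add_assoc]
  simpa only [← hu] using h₃.trans h₁

theorem reflTransGen_succ (n : ℕ) :
    Relation.ReflTransGen (movesAdj M) ![n + 4, 0, 0] ![n + 5, 0, 0] := by
  have h := symm (reflTransGen_sum_zero_zero ![n, 1, 3])
  simp only [Fin.sum_univ_three, Matrix.cons_val] at h
  refine h.tail (symm (movesAdj_of_mem (w := ![-5, 1, 3]) (by simp [M]) ?_))
  intro i; fin_cases i <;> simp

theorem reflTransGen_four_add (n : ℕ) :
    Relation.ReflTransGen (movesAdj M) ![4, 0, 0] ![n + 4, 0, 0] := by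
  induction n with
  | zero => rfl
  | succ n ih => exact ih.trans (by simpa [add_right_comm] using reflTransGen_succ n)

theorem reflTransGen_iff (u v : Fin 3 → ℕ) :
    Relation.ReflTransGen (movesAdj M) u v ↔
      (∑ i, u i = ∑ i, v i ∧ ∑ i, u i ≤ 3) ∨ (4 ≤ ∑ i, u i ∧ 4 ≤ ∑ i, v i) := by
  refine ⟨fun h => by have := min_sum_eq_of_reflTransGen h; omega, ?_⟩
  have hu := reflTransGen_sum_zero_zero u
  have hv := symm (reflTransGen_sum_zero_zero v)
  rintro (⟨hsum, -⟩ | ⟨hu4, hv4⟩)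
  · exact hu.trans (hsum ▸ hv)
  · obtain ⟨m, hm⟩ := Nat.exists_eq_add_of_le' hu4
    obtain ⟨n, hn⟩ := Nat.exists_eq_add_of_le' hv4
    rw [hm] at hu
    rw [hn] at hv
    exact hu.trans ((symm (reflTransGen_four_add m)).trans ((reflTransGen_four_add n).trans hv))

theorem infinite_four_le_sum : {u : Fin 3 → ℕ | 4 ≤ ∑ i, u i}.Infinite :=
  Set.infinite_of_injective_forall_mem (f := fun n : ℕ => ![n + 4, 0, 0])
    (fun a b h => by simpa using congrFun h 0) (fun n => by simp [Fin.sum_univ_three])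

theorem pderiv_relations_iff {R : Type*} [CommSemiring R] (p : MvPolynomial (Fin 3) R) :
    (pderiv 0 p = pderiv 1 p ∧ pderiv 1 ((pderiv 2)^[3] p) = (pderiv 0)^[5] p ∧
        pderiv 2 p = pderiv 1 p) ↔
      (∀ i, pderiv i p = pderiv 0 p) ∧ (pderiv 0)^[4] p = (pderiv 0)^[5] p := by
  constructor
  · rintro ⟨h₀₁, h₂₃, h₂₁⟩
    have hp : ∀ i, pderiv i p = pderiv 0 p := by
      intro i; fin_cases i
      exacts [rfl, h₀₁.symm, h₂₁.trans h₀₁.symm]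
    rw [iterate_pderiv_of_forall_pderiv_eq hp, pderiv_iterate_pderiv_of_forall_pderiv_eq hp] at h₂₃
    exact ⟨hp, h₂₃⟩
  · rintro ⟨hp, h₄₅⟩
    refine ⟨(hp 1).symm, ?_, (hp 2).trans (hp 1).symm⟩
    rwa [iterate_pderiv_of_forall_pderiv_eq hp, pderiv_iterate_pderiv_of_forall_pderiv_eq hp]

end MSubgraph

/-- For `M` with columns `(1,−1,0)`, `(−5,1,3)`, `(0,−1,1)`, the
bounded `M`-subgraphs of `ℕ³` are exactly the slices `{u : Σu = n}` for
`n = 0,1,2,3`, while `{u : Σu ≥ 4}` is a single unbounded `M`-subgraph; hence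
`1, x+y+z, (x+y+z)², (x+y+z)³` form a basis of the polynomial solutions of
`I(M) = ⟨∂₁ − ∂₂, ∂₂∂₃³ − ∂₁⁵, ∂₃ − ∂₂⟩`. -/
theorem explicit_M_subgraphs_and_solutions :
    let w₁ : Fin 3 → ℤ := ![1, -1, 0]
    let w₂ : Fin 3 → ℤ := ![-5, 1, 3]
    let w₃ : Fin 3 → ℤ := ![0, -1, 1]
    let adj : (Fin 3 → ℕ) → (Fin 3 → ℕ) → Prop := fun u v =>
      ∃ w ∈ ({w₁, w₂, w₃} : Set (Fin 3 → ℤ)),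
        (∀ i, (v i : ℤ) = (u i : ℤ) + w i) ∨ (∀ i, (u i : ℤ) = (v i : ℤ) + w i)
    let s : MvPolynomial (Fin 3) ℂ := X 0 + X 1 + X 2
    let IsSolP : MvPolynomial (Fin 3) ℂ → Prop := fun p =>
      pderiv (0 : Fin 3) p = pderiv (1 : Fin 3) p ∧
      pderiv (1 : Fin 3) ((fun r => pderiv (2 : Fin 3) r)^[3] p)
        = (fun r => pderiv (0 : Fin 3) r)^[5] p ∧
      pderiv (2 : Fin 3) p = pderiv (1 : Fin 3) p
    (∀ u v : Fin 3 → ℕ,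
        Relation.ReflTransGen adj u v ↔
          ((∑ i, u i = ∑ i, v i ∧ ∑ i, u i ≤ 3) ∨ (4 ≤ ∑ i, u i ∧ 4 ≤ ∑ i, v i))) ∧
    {u : Fin 3 → ℕ | 4 ≤ ∑ i, u i}.Infinite ∧
    (∀ n : ℕ, n ≤ 3 → IsSolP (s ^ n)) ∧
    (∀ p : MvPolynomial (Fin 3) ℂ, IsSolP p →
        ∃! a : Fin 4 → ℂ, p = ∑ n : Fin 4, a n • s ^ (n : ℕ)) := by
  intro w₁ w₂ w₃ adj s IsSolP
  have hs : s = ∑ i, X i := (Fin.sum_univ_three _).symm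
  have hsol (p) : IsSolP p ↔
      (∀ i, pderiv i p = pderiv 0 p) ∧ (pderiv 0)^[4] p = (pderiv 0)^[5] p :=
    MSubgraph.pderiv_relations_iff p
  refine ⟨MSubgraph.reflTransGen_iff, MSubgraph.infinite_four_le_sum, fun n hn => ?_,
    fun p hp => ?_⟩
  · rw [hsol, hs]
    refine ⟨fun i => (iterate_pderiv_sum_X_pow i 1 n).trans (iterate_pderiv_sum_X_pow 0 1 n).symm,
      ?_⟩
    rw [iterate_pderiv_sum_X_pow, iterate_pderiv_sum_X_pow,
      Nat.descFactorial_eq_zero_iff_lt.mpr (by omega),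
      Nat.descFactorial_eq_zero_iff_lt.mpr (by omega), zero_smul, zero_smul]
  · obtain ⟨hdiag, h₄₅⟩ := (hsol p).1 hp
    rw [hs]
    refine existsUnique_eq_sum_smul_sum_X_pow hdiag (eq_zero_of_pderiv_eq_self (i := 0) ?_)
    rw [← Function.iterate_succ_apply' (pderiv 0)]
    exact h₄₅.symm
end

section
/- Let R be a Noetherian ℤ^d-graded ring finitely generated over its degree-0 piece by homogeneous elements, and let V be a finitely generated graded R-module. Then the quasidegree set qdeg(V), defined as the Zariski closure in ℂ^d of the true degree set tdeg(V) = {β ∈ ℤ^d : V_β ≠ 0}, is a finite union of affine subspaces of ℂ^d, each a translate of the complex span of the degrees of some subset of the homogeneous generators of R. -/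
/-!
By Noetherian induction on homogeneous submodules `N ⊆ V`, the true degree set of `V ⧸ N` is a
finite union of shifted semigroups `δ₀ + ℕ{dg j | j ∈ s}`. If some homogeneous element lies
outside `N`, pick one, `v` of degree `δ₀`, whose colon ideal `P = (N : v)` is maximal; then
`P` is prime on homogeneous elements and
`tdeg(V ⧸ N) = tdeg(V ⧸ (N + R v)) ∪ (δ₀ + tdeg(R ⧸ P))`. Since `R` is spanned over `R₀` by
the monomials in the `g j`, `tdeg(R ⧸ P)` is the semigroup generated by the `dg j` with
`g j ∉ P`. Finally, the Zariski closure of `β + ℕ{v_j}` is `β + ℂ{v_j}`: affine subspaces are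
Zariski closed, and a polynomial vanishing on `ℕ^s` vanishes identically.
-/

open MvPolynomial DirectSum

namespace MvPolynomial

theorem eq_zero_of_eval_natCast_eq_zero {R σ : Type*} [CommRing R] [IsDomain R] [CharZero R]
    [Finite σ] (p : MvPolynomial σ R) (hp : ∀ c : σ → ℕ, eval (fun i => (c i : R)) p = 0) :
    p = 0 := by
  classical
  refine eq_zero_of_eval_zero_at_prod_finset p
    (fun _ => (Finset.range (p.totalDegree + 1)).image Nat.cast) (fun i => ?_) fun x hx => ?_
  · rw [Finset.card_image_of_injective _ Nat.cast_injective, Finset.card_range]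
    exact Nat.lt_succ_of_le (degreeOf_le_totalDegree p i)
  · choose c _ hc using fun i => Finset.mem_image.mp (hx i)
    simpa only [hc] using hp c

variable {K σ ι : Type*} [Field K]

def zariskiClosure (S : Set (σ → K)) : Set (σ → K) :=
  zeroLocus K (vanishingIdeal K S)

theorem mem_zariskiClosure {S : Set (σ → K)} {x : σ → K} :
    x ∈ zariskiClosure S ↔ ∀ p : MvPolynomial σ K, (∀ y ∈ S, eval y p = 0) → eval x p = 0 := by
  simp [zariskiClosure]

theorem subset_zariskiClosure (S : Set (σ → K)) : S ⊆ zariskiClosure S :=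
  zeroLocus_vanishingIdeal_le S

theorem zariskiClosure_mono {S T : Set (σ → K)} (h : S ⊆ T) :
    zariskiClosure S ⊆ zariskiClosure T :=
  zeroLocus_anti_mono (vanishingIdeal_anti_mono h)

theorem zariskiClosure_biUnion (t : Finset ι) (S : ι → Set (σ → K)) :
    zariskiClosure (⋃ i ∈ t, S i) = ⋃ i ∈ t, zariskiClosure (S i) := by
  refine subset_antisymm (fun x hx => ?_)
    (Set.iUnion₂_subset fun i hi => zariskiClosure_mono (Set.subset_biUnion_of_mem hi))
  by_contra hx'
  have : ∀ i, ∃ p : MvPolynomial σ K, i ∈ t → (∀ y ∈ S i, eval y p = 0) ∧ eval x p ≠ 0 := by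
    intro i
    by_cases hi : i ∈ t
    · have : x ∉ zariskiClosure (S i) := fun h => hx' (Set.mem_biUnion hi h)
      simp only [mem_zariskiClosure, not_forall] at this
      obtain ⟨p, hpS, hpx⟩ := this
      exact ⟨p, fun _ => ⟨hpS, hpx⟩⟩
    · exact ⟨0, fun h => absurd h hi⟩
  choose p hp using this
  refine Finset.prod_ne_zero_iff.mpr (fun i hi => (hp i hi).2) ?_
  rw [← map_prod]
  refine mem_zariskiClosure.mp hx _ fun y hy => ?_
  obtain ⟨i, hi, hyi⟩ := Set.mem_iUnion₂.mp hy
  rw [map_prod]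
  exact Finset.prod_eq_zero hi ((hp i hi).1 y hyi)

theorem zariskiClosure_mk' [Fintype σ] (β : σ → K) (U : Submodule K (σ → K)) :
    zariskiClosure (AffineSubspace.mk' β U : Set (σ → K)) = AffineSubspace.mk' β U := by
  classical
  refine subset_antisymm (fun x hx => ?_) (subset_zariskiClosure _)
  by_contra hxU
  rw [SetLike.mem_coe, AffineSubspace.mem_mk', vsub_eq_sub] at hxU
  obtain ⟨φ, hφx, hφU⟩ := Submodule.exists_dual_map_eq_bot_of_notMem hxU inferInstance
  set p : MvPolynomial σ K :=
    ∑ i, C (φ fun j => if i = j then 1 else 0) * X i - C (φ β)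
  have hp : ∀ y, eval y p = φ (y - β) := by
    intro y
    simp [p, φ.pi_apply_eq_sum_univ y, mul_comm]
  refine hφx ((hp x).symm.trans (mem_zariskiClosure.mp hx p fun y hy => ?_))
  rw [hp]
  exact (Submodule.eq_bot_iff _).mp hφU _ (Submodule.mem_map_of_mem (AffineSubspace.mem_mk'.mp hy))

theorem zariskiClosure_range_natCast [CharZero K] [Fintype ι] [Fintype σ] (β : σ → K)
    (L : (ι → K) →ₗ[K] (σ → K)) :
    zariskiClosure (Set.range fun c : ι → ℕ => β + L fun j => (c j : K)) =
      Set.range fun c => β + L c := by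
  classical
  have hrange : (Set.range fun c => β + L c) = AffineSubspace.mk' β (LinearMap.range L) := by
    ext x
    simp [AffineSubspace.mem_mk', sub_eq_iff_eq_add', eq_comm]
  refine subset_antisymm ?_ ?_
  · rw [hrange, ← zariskiClosure_mk']
    exact zariskiClosure_mono (hrange ▸ Set.range_subset_iff.mpr fun c => ⟨_, rfl⟩)
  · rintro _ ⟨c, rfl⟩
    refine mem_zariskiClosure.mpr fun p hp => ?_
    let F : σ → MvPolynomial ι K :=
      fun i => C (β i) + ∑ j, C (L (fun k => if j = k then 1 else 0) i) * X j
    have hF : ∀ c : ι → K, (fun i => eval c (F i)) = β + L c := by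
      intro c
      funext i
      simp [F, L.pi_apply_eq_sum_univ c, mul_comm]
    have hpF : ∀ c : ι → K, eval c (bind₁ F p) = eval (β + L c) p := fun c => by
      simpa only [aeval_eq_eval, hF] using aeval_bind₁ c F p
    have hp0 : bind₁ F p = 0 := eq_zero_of_eval_natCast_eq_zero _ fun a => by
      rw [hpF]
      exact hp _ ⟨a, rfl⟩
    rw [← hpF, hp0, map_zero]

end MvPolynomial

section AffineSemigroupShifts

variable {ι κ : Type*} [AddCommMonoid ι] (dg : κ → ι)

def affineSemigroupShift (β : ι) (s : Finset κ) : Set ι :=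
  {δ | ∃ c : κ → ℕ, δ = β + ∑ j ∈ s, c j • dg j}

theorem image_add_right_affineSemigroupShift (β γ : ι) (s : Finset κ) :
    (· + γ) '' affineSemigroupShift dg β s = affineSemigroupShift dg (β + γ) s := by
  ext δ
  simp only [affineSemigroupShift, Set.mem_image, Set.mem_ofPred_eq]
  constructor
  · rintro ⟨_, ⟨c, rfl⟩, rfl⟩
    exact ⟨c, add_right_comm _ _ _⟩
  · rintro ⟨c, rfl⟩
    exact ⟨_, ⟨c, rfl⟩, add_right_comm _ _ _⟩

def IsUnionOfSemigroupShifts (T : Set ι) : Prop :=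
  ∃ t : Finset (ι × Finset κ), T = ⋃ q ∈ t, affineSemigroupShift dg q.1 q.2

theorem IsUnionOfSemigroupShifts.union_affineSemigroupShift {T : Set ι}
    (hT : IsUnionOfSemigroupShifts dg T) (β : ι) (s : Finset κ) :
    IsUnionOfSemigroupShifts dg (T ∪ affineSemigroupShift dg β s) := by
  classical
  obtain ⟨t, rfl⟩ := hT
  exact ⟨insert (β, s) t, by rw [Finset.set_biUnion_insert, Set.union_comm]⟩

end AffineSemigroupShifts

theorem zariskiClosure_image_affineSemigroupShift {ι κ σ K : Type*} [AddCommMonoid ι] [Field K]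
    [CharZero K] [Fintype κ] [Fintype σ] (φ : ι →+ (σ → K)) (dg : κ → ι) (β : ι)
    (s : Finset κ) :
    zariskiClosure (φ '' affineSemigroupShift dg β s) =
      {x | ∃ c : κ → K, x = φ β + ∑ j ∈ s, c j • φ (dg j)} := by
  let L : (κ → K) →ₗ[K] (σ → K) := ∑ j ∈ s, (LinearMap.proj j).smulRight (φ (dg j))
  have hL : ∀ c, L c = ∑ j ∈ s, c j • φ (dg j) := fun c => by simp [L]
  have himage : φ '' affineSemigroupShift dg β s =
      Set.range fun c : κ → ℕ => φ β + L fun j => (c j : K) := by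
    ext x
    simp [affineSemigroupShift, hL, map_sum, map_nsmul, Nat.cast_smul_eq_nsmul, eq_comm]
  rw [himage, zariskiClosure_range_natCast]
  ext x
  simp [hL, eq_comm]

/-- The true degree set `tdeg(M ⧸ N)`, expressed without forming the quotient. -/
def tdeg {ι R M : Type*} [Ring R] [AddCommGroup M] [Module R M] (ℳ : ι → AddSubgroup M)
    (N : Submodule R M) : Set ι :=
  {δ | ∃ v ∈ ℳ δ, v ∉ N}

/-- For a homogeneous ideal and a linearly ordered grading this is equivalent to primality
(`Ideal.IsHomogeneous.isPrime_iff`), but `ℤ^d` is not linearly ordered. -/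
def IsHomogeneouslyPrime {ι R : Type*} [CommRing R] (𝒜 : ι → AddSubgroup R) (P : Ideal R) :
    Prop :=
  P ≠ ⊤ ∧ ∀ ⦃α β : ι⦄ ⦃x y : R⦄, x ∈ 𝒜 α → y ∈ 𝒜 β → x * y ∈ P → x ∈ P ∨ y ∈ P

section HomogeneouslyPrime

variable {ι κ R : Type*} [DecidableEq ι] [AddCommMonoid ι] [CommRing R]
  (𝒜 : ι → AddSubgroup R) [GradedRing 𝒜] {g : κ → R} {dg : κ → ι}

theorem IsHomogeneouslyPrime.prod_pow_notMem {P : Ideal R} (hP : IsHomogeneouslyPrime 𝒜 P)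
    {s : Finset κ} (hs : ∀ j ∈ s, g j ∈ 𝒜 (dg j) ∧ g j ∉ P) (c : κ → ℕ) :
    ∏ j ∈ s, g j ^ c j ∉ P := by
  let H : Submonoid R :=
    { carrier := {x | (∃ α, x ∈ 𝒜 α) ∧ x ∉ P}
      one_mem' :=
        ⟨⟨0, SetLike.one_mem_graded 𝒜⟩, fun h => hP.1 (P.eq_top_of_isUnit_mem h isUnit_one)⟩
      mul_mem' := fun ⟨⟨α, hx⟩, hxP⟩ ⟨⟨β, hy⟩, hyP⟩ =>
        ⟨⟨α + β, SetLike.mul_mem_graded hx hy⟩, fun h => (hP.2 hx hy h).elim hxP hyP⟩ }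
  exact (H.prod_mem fun j hj => H.pow_mem ⟨⟨dg j, (hs j hj).1⟩, (hs j hj).2⟩ (c j)).2

theorem mem_of_forall_prod_pow_mem [Fintype κ] (hg : ∀ j, g j ∈ 𝒜 (dg j))
    (hgen : Subring.closure ((𝒜 0 : Set R) ∪ Set.range g) = ⊤) (I : Ideal R) {δ : ι} {x : R}
    (hx : x ∈ 𝒜 δ) (hI : ∀ a : κ → ℕ, ∑ j, a j • dg j = δ → ∏ j, g j ^ a j ∈ I) : x ∈ I := by
  let R₀ := SetLike.GradeZero.subring 𝒜
  have hspan : x ∈ Submodule.span R₀ (Submonoid.closure (Set.range g)) := by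
    rw [← Algebra.adjoin_eq_span, Subalgebra.mem_toSubmodule, Algebra.mem_adjoin_iff]
    have hR₀ : Set.range (algebraMap R₀ R) = 𝒜 0 :=
      Set.ext fun y => ⟨by rintro ⟨⟨y, hy⟩, rfl⟩; exact hy, fun hy => ⟨⟨y, hy⟩, rfl⟩⟩
    exact hR₀ ▸ hgen ▸ Subring.mem_top x
  rw [← decompose_of_mem_same 𝒜 hx]
  clear hx
  induction hspan using Submodule.span_induction with
  | mem y hy =>
    obtain ⟨a, rfl⟩ := Submonoid.mem_closure_range_iff_of_fintype.mp hy
    have hdeg := SetLike.prod_pow_mem_graded 𝒜 dg g (F := Finset.univ) a fun j _ => hg j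
    by_cases ha : ∑ j, a j • dg j = δ
    · rw [decompose_of_mem_same 𝒜 (ha ▸ hdeg)]
      exact hI a ha
    · rw [decompose_of_mem_ne 𝒜 hdeg ha]
      exact zero_mem I
  | zero => simp
  | add y z _ _ hy hz =>
    rw [decompose_add, DirectSum.add_apply, AddMemClass.coe_add]
    exact add_mem hy hz
  | smul c y _ hy =>
    rw [Subring.smul_def, smul_eq_mul, coe_decompose_mul_of_left_mem_zero 𝒜 c.2]
    exact I.mul_mem_left _ hy

open Classical in
theorem IsHomogeneouslyPrime.tdeg_eq [Fintype κ] (hg : ∀ j, g j ∈ 𝒜 (dg j))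
    (hgen : Subring.closure ((𝒜 0 : Set R) ∪ Set.range g) = ⊤) {P : Ideal R}
    (hP : IsHomogeneouslyPrime 𝒜 P) :
    tdeg 𝒜 P = affineSemigroupShift dg 0 {j | g j ∉ P} := by
  ext δ
  constructor
  · rintro ⟨x, hx, hxP⟩
    by_contra hδ
    refine hxP (mem_of_forall_prod_pow_mem 𝒜 hg hgen P hx fun a ha => ?_)
    by_contra hmon
    refine hδ ⟨a, ?_⟩
    rw [zero_add, ← ha]
    refine (Finset.sum_subset (Finset.subset_univ _) fun j _ hj => ?_).symm
    have haj : a j = 0 := by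
      by_contra haj
      refine hmon (P.mem_of_dvd ?_ (by simpa using hj))
      exact (dvd_pow_self (g j) haj).trans (Finset.dvd_prod_of_mem _ (Finset.mem_univ j))
    rw [haj, zero_smul]
  · rintro ⟨c, rfl⟩
    refine ⟨∏ j ∈ {j | g j ∉ P}, g j ^ c j, ?_, hP.prod_pow_notMem 𝒜 (fun j hj => ⟨hg j, ?_⟩) c⟩
    · simpa using SetLike.prod_pow_mem_graded 𝒜 dg g c fun j _ => hg j
    · simpa using hj

end HomogeneouslyPrime

section GradedModule

variable {ι R M : Type*} [AddCommGroup ι] [CommRing R] [AddCommGroup M] [Module R M]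
  (𝒜 : ι → AddSubgroup R) (ℳ : ι → AddSubgroup M)

theorem exists_isHomogeneouslyPrime_colon [IsNoetherianRing R] [SetLike.GradedSMul 𝒜 ℳ]
    {N : Submodule R M} (hN : (tdeg ℳ N).Nonempty) :
    ∃ δ₀, ∃ v ∈ ℳ δ₀, v ∉ N ∧ IsHomogeneouslyPrime 𝒜 (N.colon {v}) := by
  -- The colon ideal maximal among those of homogeneous `v ∉ N` is an associated prime.
  obtain ⟨δ, v, hv, hvN⟩ := hN
  obtain ⟨_, ⟨δ₀, v, hv, hvN, rfl⟩, hmax⟩ := set_has_maximal_iff_noetherian.mpr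
    (inferInstance : IsNoetherian R R) {J | ∃ δ₀, ∃ v ∈ ℳ δ₀, v ∉ N ∧ J = N.colon {v}}
    ⟨_, δ, v, hv, hvN, rfl⟩
  refine ⟨δ₀, v, hv, hvN, fun htop => hvN ?_, fun α β x y hx hy hxy => ?_⟩
  · simpa using Submodule.mem_colon_singleton.mp (htop ▸ Submodule.mem_top : (1 : R) ∈ _)
  by_contra! hxy'
  refine hmax _ ⟨α + δ₀, x • v, SetLike.GradedSMul.smul_mem hx hv,
    mt Submodule.mem_colon_singleton.mpr hxy'.1, rfl⟩ (lt_of_le_of_ne (fun z hz => ?_) fun h => ?_)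
  · rw [Submodule.mem_colon_singleton, smul_comm]
    exact N.smul_mem x (Submodule.mem_colon_singleton.mp hz)
  · refine hxy'.2 (h ▸ Submodule.mem_colon_singleton.mpr ?_)
    rw [smul_smul, mul_comm]
    exact Submodule.mem_colon_singleton.mp hxy

variable [DecidableEq ι] [Decomposition ℳ]

theorem coe_decompose_smul_add_of_right_mem [GradedRing 𝒜] [SetLike.GradedSMul 𝒜 ℳ] {v : M}
    {δ₀ : ι} (hv : v ∈ ℳ δ₀) (z : R) (δ : ι) :
    (decompose ℳ (z • v) (δ + δ₀) : M) = (decompose 𝒜 z δ : R) • v := by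
  induction z using DirectSum.Decomposition.inductionOn 𝒜 with
  | zero => simp
  | @homogeneous i z =>
    have hzv : (z : R) • v ∈ ℳ (i + δ₀) := SetLike.GradedSMul.smul_mem z.2 hv
    by_cases hi : i = δ
    · subst hi
      rw [decompose_of_mem_same ℳ hzv, decompose_coe, of_eq_same]
    · rw [decompose_of_mem_ne ℳ hzv (j := δ + δ₀) (by simpa using hi), decompose_coe,
        of_eq_of_ne _ _ _ (Ne.symm hi), ZeroMemClass.coe_zero, zero_smul]
  | add z z' hz hz' => simp [add_smul, hz, hz']

theorem Submodule.IsHomogeneous.sup_span_singleton [GradedRing 𝒜] [SetLike.GradedSMul 𝒜 ℳ]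
    {N : Submodule R M} (hN : N.IsHomogeneous ℳ) {v : M} {δ₀ : ι} (hv : v ∈ ℳ δ₀) :
    (N ⊔ R ∙ v).IsHomogeneous ℳ := by
  intro δ u hu
  obtain ⟨δ, rfl⟩ : ∃ δ', δ = δ' + δ₀ := ⟨δ - δ₀, (sub_add_cancel δ δ₀).symm⟩
  obtain ⟨w, hw, _, hzv, rfl⟩ := Submodule.mem_sup.mp hu
  obtain ⟨z, rfl⟩ := Submodule.mem_span_singleton.mp hzv
  rw [decompose_add, DirectSum.add_apply, AddMemClass.coe_add,
    coe_decompose_smul_add_of_right_mem 𝒜 ℳ hv]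
  exact add_mem (Submodule.mem_sup_left (hN _ hw))
    (Submodule.mem_sup_right (Submodule.smul_mem _ _ (Submodule.mem_span_singleton_self v)))

variable [GradedRing 𝒜] [SetLike.GradedSMul 𝒜 ℳ]

theorem tdeg_eq_union_colon {N : Submodule R M} (hN : N.IsHomogeneous ℳ) {v : M} {δ₀ : ι}
    (hv : v ∈ ℳ δ₀) :
    tdeg ℳ N = tdeg ℳ (N ⊔ R ∙ v) ∪ (· + δ₀) '' tdeg 𝒜 (N.colon {v}) := by
  ext δ
  obtain ⟨δ, rfl⟩ : ∃ δ', δ = δ' + δ₀ := ⟨δ - δ₀, (sub_add_cancel δ δ₀).symm⟩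
  constructor
  · rintro ⟨u, hu, huN⟩
    by_cases hu' : u ∈ N ⊔ R ∙ v
    · obtain ⟨w, hw, _, hzv, rfl⟩ := Submodule.mem_sup.mp hu'
      obtain ⟨z, rfl⟩ := Submodule.mem_span_singleton.mp hzv
      refine Or.inr ⟨δ, ⟨decompose 𝒜 z δ, SetLike.coe_mem _, fun hz => huN ?_⟩, rfl⟩
      rw [← decompose_of_mem_same ℳ hu, decompose_add, DirectSum.add_apply, AddMemClass.coe_add,
        coe_decompose_smul_add_of_right_mem 𝒜 ℳ hv]
      exact add_mem (hN _ hw) (Submodule.mem_colon_singleton.mp hz)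
    · exact Or.inl ⟨u, hu, hu'⟩
  · rintro (⟨u, hu, huN⟩ | ⟨δ', ⟨z, hz, hzN⟩, hδ'⟩)
    · exact ⟨u, hu, fun h => huN (Submodule.mem_sup_left h)⟩
    · rw [← hδ']
      exact ⟨z • v, SetLike.GradedSMul.smul_mem hz hv,
        fun h => hzN (Submodule.mem_colon_singleton.mpr h)⟩

theorem isUnionOfSemigroupShifts_tdeg [IsNoetherianRing R] [Module.Finite R M] {κ : Type*}
    [Fintype κ] {g : κ → R} {dg : κ → ι} (hg : ∀ j, g j ∈ 𝒜 (dg j))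
    (hgen : Subring.closure ((𝒜 0 : Set R) ∪ Set.range g) = ⊤) {N : Submodule R M}
    (hN : N.IsHomogeneous ℳ) : IsUnionOfSemigroupShifts dg (tdeg ℳ N) := by
  induction N using WellFoundedGT.induction with
  | _ N ih =>
  rcases (tdeg ℳ N).eq_empty_or_nonempty with hempty | hne
  · exact ⟨∅, by simp [hempty]⟩
  obtain ⟨δ₀, v, hv, hvN, hP⟩ := exists_isHomogeneouslyPrime_colon 𝒜 ℳ hne
  rw [tdeg_eq_union_colon 𝒜 ℳ hN hv, hP.tdeg_eq 𝒜 hg hgen, image_add_right_affineSemigroupShift]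
  have hlt : N < N ⊔ R ∙ v := SetLike.lt_iff_le_and_exists.mpr
    ⟨le_sup_left, v, Submodule.mem_sup_right (Submodule.mem_span_singleton_self v), hvN⟩
  exact (ih _ hlt (hN.sup_span_singleton 𝒜 ℳ hv)).union_affineSemigroupShift _ _ _

end GradedModule

/-- Let `R` be a Noetherian `ℤ^d`-graded ring, finitely
generated over its degree-0 piece by homogeneous elements `g j` of degrees
`dg j`, and let `V` be a finitely generated graded `R`-module.  Then the
quasidegree set `qdeg(V)` — the Zariski closure in `ℂ^d` of
`tdeg(V) = {β ∈ ℤ^d : V_β ≠ 0}` — is a finite union of affine subspaces of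
`ℂ^d`, each a translate of the complex span of the degrees of some subset of
the generators of `R`. -/
theorem quasidegrees_are_affine_subspace_arrangement
    (d r : ℕ) {R V : Type} [CommRing R] [IsNoetherianRing R]
    (𝒜 : (Fin d → ℤ) → AddSubgroup R) [GradedRing 𝒜]
    (g : Fin r → R) (dg : Fin r → Fin d → ℤ)
    (hg : ∀ j, g j ∈ 𝒜 (dg j))
    (hgen : Subring.closure ((𝒜 0 : Set R) ∪ Set.range g) = ⊤)
    [AddCommGroup V] [Module R V] [Module.Finite R V]
    (𝒱 : (Fin d → ℤ) → AddSubgroup V) [DirectSum.Decomposition 𝒱]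
    (hsmul : ∀ (α β : Fin d → ℤ) (x : R) (v : V),
      x ∈ 𝒜 α → v ∈ 𝒱 β → x • v ∈ 𝒱 (α + β)) :
    ∃ t : Finset ((Fin d → ℂ) × Finset (Fin r)),
      -- the Zariski closure in ℂ^d of the set of true degrees of V ...
      {x : Fin d → ℂ | ∀ p : MvPolynomial (Fin d) ℂ,
          (∀ β : Fin d → ℤ, 𝒱 β ≠ ⊥ →
            MvPolynomial.eval (fun i => (β i : ℂ)) p = 0) →
          MvPolynomial.eval x p = 0}
      -- ... is a finite union of translated spans of subsets of the dg j's
      = ⋃ s ∈ t, {x : Fin d → ℂ | ∃ c : Fin r → ℂ,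
          x = s.1 + ∑ j ∈ s.2, c j • (fun i => (dg j i : ℂ))} := by
  classical
  have : SetLike.GradedSMul 𝒜 𝒱 := ⟨@fun α β x v hx hv => hsmul α β x v hx hv⟩
  have hbot : (⊥ : Submodule R V).IsHomogeneous 𝒱 := fun δ v hv => by
    simp [(Submodule.mem_bot R).mp hv]
  obtain ⟨t, ht⟩ := isUnionOfSemigroupShifts_tdeg (M := V) 𝒜 𝒱 hg hgen hbot
  let φ : (Fin d → ℤ) →+ (Fin d → ℂ) := (Int.castAddHom ℂ).compLeft (Fin d)
  have hqdeg : {x : Fin d → ℂ | ∀ p : MvPolynomial (Fin d) ℂ,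
      (∀ β : Fin d → ℤ, 𝒱 β ≠ ⊥ → MvPolynomial.eval (fun i => (β i : ℂ)) p = 0) →
        MvPolynomial.eval x p = 0} = zariskiClosure (φ '' tdeg 𝒱 (⊥ : Submodule R V)) := by
    have htdeg : tdeg 𝒱 (⊥ : Submodule R V) = {β | 𝒱 β ≠ ⊥} := by
      ext β
      simp [tdeg, AddSubgroup.ne_bot_iff_exists_ne_zero]
    ext x
    simp only [mem_zariskiClosure, htdeg, Set.forall_mem_image, Set.mem_ofPred_eq]
    rfl
  refine ⟨t.image fun q => (φ q.1, q.2), ?_⟩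
  rw [hqdeg, ht, Set.image_iUnion₂, zariskiClosure_biUnion, Finset.set_biUnion_finset_image]
  simp_rw [zariskiClosure_image_affineSemigroupShift]
  rfl
end

section
/- Let A = [[1,1,0,0],[0,1,1,1]] and B the 4×2 matrix with rows (1,1), (−1,−1), (1,0), (0,1), and consider the lattice basis ideal I(B) = ⟨∂₁∂₃ − ∂₂, ∂₁∂₄ − ∂₂⟩. For β = (0, β₂), every monomial x₃^{w₃} x₄^{w₄} with w₃ + w₄ = β₂ (w₃, w₄ ∈ ℂ) is annihilated by the generators of H_A(I(B), β) = I(B) + ⟨x₁∂₁ − x₂∂₂, x₂∂₂ + x₃∂₃ + x₄∂₄ − β₂⟩; hence the local solution space of this Horn system at parameter (0, β₂) has uncountable dimension. -/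
open Complex

private lemma cpow_hasDerivAt (w : ℂ) {t : ℝ} (ht : 0 < t) :
    HasDerivAt (fun s : ℝ => (s : ℂ) ^ w) (w * (t : ℂ) ^ (w - 1)) t := by
  have h : HasDerivAt (fun z : ℂ => z ^ w) (w * (t : ℂ) ^ (w - 1)) (t : ℂ) :=
    (Complex.hasStrictDerivAt_cpow_const (by simp [Complex.mem_slitPlane_iff, ht])).hasDerivAt
  exact h.comp_ofReal

private lemma exp_deriv0 (w : ℂ) :
    HasDerivAt (fun s : ℝ => Complex.exp ((s : ℂ) * w)) w 0 := by
  have := ((hasDerivAt_mul_const (c := w) (x := ((0:ℝ):ℂ))).cexp).comp_ofReal (z := (0:ℝ))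
  simpa using this

private lemma exp_inj : Function.Injective
    (fun w : ℂ => fun s : ℝ => Complex.exp (s * w)) := by
  intro w w' h
  have h2 : HasDerivAt (fun s : ℝ => Complex.exp ((s : ℂ) * w)) w' 0 := by
    rw [show (fun s : ℝ => Complex.exp ((s : ℂ) * w))
        = fun s : ℝ => Complex.exp ((s:ℂ) * w') from h]
    exact exp_deriv0 w'
  exact (exp_deriv0 w).unique h2

/-- the additive-to-multiplicative character `s ↦ exp (s w)` -/
private noncomputable def chr (w : ℂ) : Multiplicative ℝ →* ℂ where
  toFun s := Complex.exp ((Multiplicative.toAdd s : ℝ) * w)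
  map_one' := by simp
  map_mul' a b := by
    simp [toAdd_mul, ← Complex.exp_add, add_mul]

/-- For `A = [[1,1,0,0],[0,1,1,1]]`, `I(B) = ⟨∂₁∂₃ − ∂₂,
∂₁∂₄ − ∂₂⟩` and `β = (0, β₂)`, every monomial `x₃^{w₃} x₄^{w₄}` with
`w₃ + w₄ = β₂` is annihilated by the generators of `H_A(I(B), β) = I(B) +
⟨x₁∂₁ − x₂∂₂, x₂∂₂ + x₃∂₃ + x₄∂₄ − β₂⟩` (on the domain where `x₃, x₄ > 0`),
and these monomials form an uncountable linearly independent family; hence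
the local solution space at parameter `(0, β₂)` has uncountable dimension. -/
theorem horn_system_uncountable_solutions (β₂ : ℂ) :
    -- partial derivative of a function of (x₁,x₂,x₃,x₄) in direction i
    let pd : Fin 4 → ((Fin 4 → ℝ) → ℂ) → ((Fin 4 → ℝ) → ℂ) :=
      fun i F x => deriv (fun t : ℝ => F (Function.update x i t)) (x i)
    let U : Set (Fin 4 → ℝ) := {x | 0 < x 2 ∧ 0 < x 3}
    -- F is annihilated by all generators of H_A(I(B), (0, β₂)) on U
    let Sol : Set ((Fin 4 → ℝ) → ℂ) := {F | ∀ x ∈ U,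
      pd 0 (pd 2 F) x = pd 1 F x ∧
      pd 0 (pd 3 F) x = pd 1 F x ∧
      (x 0 : ℂ) * pd 0 F x = (x 1 : ℂ) * pd 1 F x ∧
      (x 1 : ℂ) * pd 1 F x + (x 2 : ℂ) * pd 2 F x + (x 3 : ℂ) * pd 3 F x
        = β₂ * F x}
    let mono : ℂ → ℂ → ((Fin 4 → ℝ) → ℂ) :=
      fun w₃ w₄ x => ((x 2 : ℂ) ^ w₃) * ((x 3 : ℂ) ^ w₄)
    (∀ w₃ w₄ : ℂ, w₃ + w₄ = β₂ → mono w₃ w₄ ∈ Sol) ∧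
    LinearIndependent ℂ (fun w : ℂ => mono w (β₂ - w)) := by
  intro pd U Sol mono
  -- any function of the form mono is unchanged by updates at coordinates 0 and 1
  have hupd : ∀ (w₃ w₄ : ℂ) (y : Fin 4 → ℝ) (j : Fin 4), j ≠ 2 → j ≠ 3 →
      ∀ t, mono w₃ w₄ (Function.update y j t) = mono w₃ w₄ y := by
    intro w₃ w₄ y j hj2 hj3 t
    simp [mono, Function.update_of_ne (Ne.symm hj2), Function.update_of_ne (Ne.symm hj3)]
  -- pd j (mono ..) = 0 for j = 0, 1
  have hpd01 : ∀ (w₃ w₄ : ℂ) (y : Fin 4 → ℝ) (j : Fin 4), j ≠ 2 → j ≠ 3 →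
      pd j (mono w₃ w₄) y = 0 := by
    intro w₃ w₄ y j hj2 hj3
    have : (fun t : ℝ => mono w₃ w₄ (Function.update y j t)) = fun _ => mono w₃ w₄ y := by
      funext t; exact hupd w₃ w₄ y j hj2 hj3 t
    simp [pd, this]
  -- explicit values of pd 2, pd 3 on U
  have hpd2 : ∀ (w₃ w₄ : ℂ) (y : Fin 4 → ℝ), 0 < y 2 →
      pd 2 (mono w₃ w₄) y = w₃ * (y 2 : ℂ) ^ (w₃ - 1) * (y 3 : ℂ) ^ w₄ := by
    intro w₃ w₄ y hy
    have hfn : (fun t : ℝ => mono w₃ w₄ (Function.update y 2 t))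
        = fun t : ℝ => ((t : ℂ) ^ w₃) * ((y 3 : ℂ) ^ w₄) := by
      funext t
      simp [mono, Function.update_of_ne (show (3:Fin 4) ≠ 2 by decide)]
    have hd : HasDerivAt (fun t : ℝ => ((t : ℂ) ^ w₃) * ((y 3 : ℂ) ^ w₄))
        (w₃ * (y 2 : ℂ) ^ (w₃ - 1) * (y 3 : ℂ) ^ w₄) (y 2) :=
      (cpow_hasDerivAt w₃ hy).mul_const _
    show deriv (fun t : ℝ => mono w₃ w₄ (Function.update y 2 t)) (y 2) = _
    rw [hfn]; exact hd.deriv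
  have hpd3 : ∀ (w₃ w₄ : ℂ) (y : Fin 4 → ℝ), 0 < y 3 →
      pd 3 (mono w₃ w₄) y = (y 2 : ℂ) ^ w₃ * (w₄ * (y 3 : ℂ) ^ (w₄ - 1)) := by
    intro w₃ w₄ y hy
    have hfn : (fun t : ℝ => mono w₃ w₄ (Function.update y 3 t))
        = fun t : ℝ => ((y 2 : ℂ) ^ w₃) * ((t : ℂ) ^ w₄) := by
      funext t
      simp [mono, Function.update_of_ne (show (2:Fin 4) ≠ 3 by decide)]
    have hd : HasDerivAt (fun t : ℝ => ((y 2 : ℂ) ^ w₃) * ((t : ℂ) ^ w₄))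
        ((y 2 : ℂ) ^ w₃ * (w₄ * (y 3 : ℂ) ^ (w₄ - 1))) (y 3) :=
      (cpow_hasDerivAt w₄ hy).const_mul _
    show deriv (fun t : ℝ => mono w₃ w₄ (Function.update y 3 t)) (y 3) = _
    rw [hfn]; exact hd.deriv
  constructor
  · intro w₃ w₄ hw x hx
    obtain ⟨h2, h3⟩ := hx
    have e0 : pd 0 (mono w₃ w₄) x = 0 := hpd01 w₃ w₄ x 0 (by decide) (by decide)
    have e1 : pd 1 (mono w₃ w₄) x = 0 := hpd01 w₃ w₄ x 1 (by decide) (by decide)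
    -- pd 0 of pd k (mono) is zero since pd k (mono) only depends on coords 2 and 3
    have e02 : ∀ k : Fin 4, k = 2 ∨ k = 3 → pd 0 (pd k (mono w₃ w₄)) x = 0 := by
      intro k hk
      have hconst : (fun t : ℝ => pd k (mono w₃ w₄) (Function.update x 0 t))
          = fun _ => pd k (mono w₃ w₄) x := by
        funext t
        show deriv (fun s : ℝ => mono w₃ w₄ (Function.update (Function.update x 0 t) k s))
            ((Function.update x 0 t) k) = _
        have hk0 : k ≠ 0 := by rcases hk with h | h <;> subst h <;> decide
        have hxk : (Function.update x 0 t) k = x k := Function.update_of_ne hk0 _ _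
        have : ∀ s : ℝ, mono w₃ w₄ (Function.update (Function.update x 0 t) k s)
            = mono w₃ w₄ (Function.update x k s) := by
          intro s
          have h2' : Function.update (Function.update x 0 t) k s 2 = Function.update x k s 2 := by
            rcases hk with h | h <;> subst h <;>
              simp [Function.update_apply]
          have h3' : Function.update (Function.update x 0 t) k s 3 = Function.update x k s 3 := by
            rcases hk with h | h <;> subst h <;>
              simp [Function.update_apply]
          simp [mono, h2', h3']
        rw [funext this, hxk]
      simp [pd, hconst]
    refine ⟨by rw [e02 2 (Or.inl rfl), e1], by rw [e02 3 (Or.inr rfl), e1], by simp [e0, e1], ?_⟩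
    rw [e1, hpd2 w₃ w₄ x h2, hpd3 w₃ w₄ x h3]
    have hne2 : ((x 2 : ℝ) : ℂ) ≠ 0 := Complex.ofReal_ne_zero.mpr h2.ne'
    have hne3 : ((x 3 : ℝ) : ℂ) ≠ 0 := Complex.ofReal_ne_zero.mpr h3.ne'
    have m2 : (x 2 : ℂ) * (x 2 : ℂ) ^ (w₃ - 1) = (x 2 : ℂ) ^ w₃ := by
      have : (x 2 : ℂ) ^ w₃ = (x 2 : ℂ) ^ (1 + (w₃ - 1)) := by ring_nf
      rw [this, Complex.cpow_add _ _ hne2, Complex.cpow_one]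
    have m3 : (x 3 : ℂ) * (x 3 : ℂ) ^ (w₄ - 1) = (x 3 : ℂ) ^ w₄ := by
      have : (x 3 : ℂ) ^ w₄ = (x 3 : ℂ) ^ (1 + (w₄ - 1)) := by ring_nf
      rw [this, Complex.cpow_add _ _ hne3, Complex.cpow_one]
    show (x 1 : ℂ) * 0 + _ + _ = β₂ * ((x 2 : ℂ) ^ w₃ * (x 3 : ℂ) ^ w₄)
    linear_combination (w₃ * (x 3 : ℂ) ^ w₄) * m2 + (w₄ * (x 2 : ℂ) ^ w₃) * m3 +
      ((x 2 : ℂ) ^ w₃ * (x 3 : ℂ) ^ w₄) * hw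
  · -- linear independence
    -- restriction map: evaluate at the point (1,1,exp s,1)
    let Φ : ((Fin 4 → ℝ) → ℂ) →ₗ[ℂ] (Multiplicative ℝ → ℂ) :=
      LinearMap.funLeft ℂ ℂ (fun s : Multiplicative ℝ =>
        fun i : Fin 4 => if i = 2 then Real.exp (Multiplicative.toAdd s) else 1)
    have hLI : LinearIndependent ℂ (fun w : ℂ => ((chr w : Multiplicative ℝ →* ℂ) :
        Multiplicative ℝ → ℂ)) := by
      refine (linearIndependent_monoidHom (Multiplicative ℝ) ℂ).comp chr ?_
      intro w w' h
      apply exp_inj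
      funext s
      have := congrFun (congrArg (fun f : Multiplicative ℝ →* ℂ => (f : Multiplicative ℝ → ℂ)) h)
        (Multiplicative.ofAdd s)
      simpa [chr] using this
    have hcomp : (fun w : ℂ => Φ (mono w (β₂ - w)))
        = fun w : ℂ => ((chr w : Multiplicative ℝ →* ℂ) : Multiplicative ℝ → ℂ) := by
      funext w s
      show ((Real.exp (Multiplicative.toAdd s) : ℂ)) ^ w * ((1 : ℝ) : ℂ) ^ (β₂ - w)
          = Complex.exp ((Multiplicative.toAdd s : ℝ) * w)
      rw [Complex.ofReal_one, Complex.one_cpow, mul_one]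
      rw [Complex.cpow_def_of_ne_zero (Complex.ofReal_ne_zero.mpr (Real.exp_ne_zero _))]
      congr 1
      rw [← Complex.ofReal_log (Real.exp_pos _).le, Real.log_exp]
    refine LinearIndependent.of_comp Φ ?_
    have : (⇑Φ ∘ fun w : ℂ => mono w (β₂ - w)) = fun w : ℂ => ((chr w : Multiplicative ℝ →* ℂ) : Multiplicative ℝ → ℂ) := hcomp
    rw [this]; exact hLI
end
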